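/- arXiv:1009.0484 — 4 statements merged into one kernel-verified Lean document; each statement's English description precedes it below -/
import Mathlib

section
/- For $n \ge 3$ odd, set $k = \frac{n-3}{2} \in \mathbb{N}_0$ and define $I(r,z) = \int_{-1}^1 \frac{(1-t^2)^{k}}{(1 - 2rt + r^2 + z^2)^{n/2}} \, dt$ for $r > 0$, $z > 0$. Then there exists a constant $C_k$ such that for all $r \in [1/2, 3/2]$ and $z > 0$, $I(r, z) \le C_k \left((1-r)^2 + z^2\right)^{-1/2}$. -/
/-!
The denominator `D(t) = 1 - 2rt + r² + z² = (r - t)² + (1 - t²) + z²` dominates `1 - t²`, and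
`n / 2 = k + 3 / 2`, so the integrand is at most `D(t)^(-3/2)`. Since `D` is affine in `t`, this has
the explicit primitive `D(t)^(-1/2) / r`, and `D(1) = (1 - r)² + z²` gives the bound with `C = 2`.
-/

open MeasureTheory Set

lemma one_sub_sq_le_one_sub_mul_add_sq (r t z : ℝ) :
    1 - t ^ 2 ≤ 1 - 2 * r * t + r ^ 2 + z ^ 2 := by
  nlinarith [sq_nonneg (r - t), sq_nonneg z]

lemma one_sub_mul_add_sq_pos {r t z : ℝ} (ht : t ∈ Icc (-1 : ℝ) 1) (hz : z ≠ 0) :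
    0 < 1 - 2 * r * t + r ^ 2 + z ^ 2 := by
  have : 0 ≤ 1 - t ^ 2 := by nlinarith [ht.1, ht.2]
  nlinarith [sq_nonneg (r - t), sq_pos_of_ne_zero hz]

lemma pow_div_rpow_natCast_add_le {a d : ℝ} (ha : 0 ≤ a) (had : a ≤ d) (hd : 0 < d)
    (k : ℕ) (s : ℝ) :
    a ^ k / d ^ ((k : ℝ) + s) ≤ d ^ (-s) := by
  rw [Real.rpow_add hd, Real.rpow_natCast, Real.rpow_neg hd.le, ← div_div,
    div_eq_mul_inv _ (d ^ s)]
  have : a ^ k / d ^ k ≤ 1 := div_le_one_of_le₀ (pow_le_pow_left₀ ha had k) (by positivity)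
  exact mul_le_of_le_one_left (by positivity) this

lemma integral_sub_mul_rpow_neg_three_halves_le {a b c m : ℝ} (hab : a ≤ b) (hm : 0 < m)
    (hb : 0 < c - m * b) :
    ∫ t in a..b, (c - m * t) ^ (-(3 / 2) : ℝ) ≤ 2 / m * (c - m * b) ^ (-(1 / 2) : ℝ) := by
  have ha : c - m * b ≤ c - m * a := by nlinarith
  have hzero : (0 : ℝ) ∉ uIcc (c - m * b) (c - m * a) := by
    rw [uIcc_of_le ha]; exact fun h => hb.not_ge h.1
  rw [intervalIntegral.integral_comp_sub_mul (fun x => x ^ (-(3 / 2) : ℝ)) hm.ne',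
    integral_rpow (Or.inr ⟨by norm_num, hzero⟩), smul_eq_mul,
    show (-(3 / 2) : ℝ) + 1 = -(1 / 2) by norm_num]
  have hA : 0 ≤ 2 / m * (c - m * a) ^ (-(1 / 2) : ℝ) :=
    mul_nonneg (by positivity) (Real.rpow_nonneg (hb.le.trans ha) _)
  calc m⁻¹ * (((c - m * a) ^ (-(1 / 2) : ℝ) - (c - m * b) ^ (-(1 / 2) : ℝ)) / -(1 / 2))
      = 2 / m * (c - m * b) ^ (-(1 / 2) : ℝ) - 2 / m * (c - m * a) ^ (-(1 / 2) : ℝ) := by ring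
    _ ≤ 2 / m * (c - m * b) ^ (-(1 / 2) : ℝ) := sub_le_self _ hA

/-- For odd `n = 2k+3`, the kernel
`I(r,z) = ∫_{-1}^1 (1-t²)^k / (1-2rt+r²+z²)^{n/2} dt`
satisfies `I(r,z) ≤ C ((1-r)² + z²)^{-1/2}` for `r ∈ [1/2,3/2]`, `z > 0`. -/
theorem stmt4 (n k : ℕ) (hnk : n = 2 * k + 3) :
    ∃ C > 0, ∀ r ∈ Icc (1/2 : ℝ) (3/2 : ℝ), ∀ z : ℝ, 0 < z →
      (∫ t in (-1 : ℝ)..1, (1 - t ^ 2) ^ k / (1 - 2*r*t + r ^ 2 + z ^ 2) ^ ((n : ℝ) / 2))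
        ≤ C * ((1 - r) ^ 2 + z ^ 2) ^ (-(1/2) : ℝ) := by
  refine ⟨2, two_pos, fun r hr z hz => ?_⟩
  have hr0 : 0 < r := by linarith [hr.1]
  have hexp : (n : ℝ) / 2 = k + 3 / 2 := by rw [hnk]; push_cast; ring
  have hD : ∀ t ∈ Icc (-1 : ℝ) 1, 0 < 1 - 2 * r * t + r ^ 2 + z ^ 2 :=
    fun t ht => one_sub_mul_add_sq_pos ht hz.ne'
  have hDc : ContinuousOn (fun t : ℝ => 1 - 2 * r * t + r ^ 2 + z ^ 2) (Icc (-1) 1) := by fun_prop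
  calc (∫ t in (-1 : ℝ)..1, (1 - t ^ 2) ^ k / (1 - 2*r*t + r ^ 2 + z ^ 2) ^ ((n : ℝ) / 2))
      ≤ ∫ t in (-1 : ℝ)..1, (1 - 2 * r * t + r ^ 2 + z ^ 2) ^ (-(3 / 2) : ℝ) := by
        refine intervalIntegral.integral_mono_on (by norm_num) ?_ ?_ fun t ht => ?_
        · refine ContinuousOn.intervalIntegrable_of_Icc (by norm_num) (.div (by fun_prop) ?_ ?_)
          · exact hDc.rpow_const fun t ht => .inl (hD t ht).ne'
          · exact fun t ht => (Real.rpow_pos_of_pos (hD t ht) _).ne'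
        · exact ContinuousOn.intervalIntegrable_of_Icc (by norm_num)
            (hDc.rpow_const fun t ht => .inl (hD t ht).ne')
        · rw [hexp]
          exact pow_div_rpow_natCast_add_le (by nlinarith [ht.1, ht.2])
            (one_sub_sq_le_one_sub_mul_add_sq r t z) (hD t ht) k _
    _ = ∫ t in (-1 : ℝ)..1, (1 + r ^ 2 + z ^ 2 - 2 * r * t) ^ (-(3 / 2) : ℝ) := by
        simp only [sub_add_eq_add_sub]
    _ ≤ 2 / (2 * r) * (1 + r ^ 2 + z ^ 2 - 2 * r * 1) ^ (-(1 / 2) : ℝ) :=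
        integral_sub_mul_rpow_neg_three_halves_le (by norm_num) (by positivity)
          (by linarith [hD 1 (by norm_num)])
    _ ≤ 2 * ((1 - r) ^ 2 + z ^ 2) ^ (-(1/2) : ℝ) := by
        rw [show 1 + r ^ 2 + z ^ 2 - 2 * r * 1 = (1 - r) ^ 2 + z ^ 2 by ring]
        gcongr
        rw [div_le_iff₀ (by positivity)]
        linarith [hr.1]
end

section
/- Define $I(r,z) = \int_{-1}^1 \frac{(1-t^2)^{-1/2}}{1 - 2rt + r^2 + z^2} \, dt$ (the case $n = 2$). Then there is a constant $C$ such that for all $r \in [1/2, 3/2]$ and $z > 0$, $I(r,z) \le C \left(|1-r| + z\right)^{-1}$. -/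
/-!
Since `r ≥ 1/2`, the denominator `(1 - r)² + z² + 2r(1 - t)` is at least `c² + (1 - t)` with
`c = (|1 - r| + z) / 2`. Factor `(1 - t²)^(-1/2) = (1 - t)^(-1/2) (1 + t)^(-1/2)`: for `t ≤ 0` the
first factor is at most `1` and the denominator at least `c² + 1`, for `t ≥ 0` the second factor is
at most `1`. The two resulting integrals are `2√2 / (c² + 1) ≤ √2 / c` and
`∫₀² s^(-1/2) / (c² + s) ds = (2 / c) arctan (√2 / c) ≤ π / c`, so `C = 2 (√2 + π)` works.
-/

open MeasureTheory Set Real intervalIntegral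

theorem intervalIntegral.integral_mono_on_of_nonneg {f g : ℝ → ℝ} {a b : ℝ} (hab : a ≤ b)
    (hg : IntervalIntegrable g volume a b) (hf : ∀ x ∈ Icc a b, 0 ≤ f x)
    (hfg : ∀ x ∈ Icc a b, f x ≤ g x) :
    ∫ x in a..b, f x ≤ ∫ x in a..b, g x := by
  rw [integral_of_le hab, integral_of_le hab]
  exact integral_mono_of_nonneg
    (ae_restrict_of_forall_mem measurableSet_Ioc fun x hx ↦ hf x (Ioc_subset_Icc_self hx)) hg.1
    (ae_restrict_of_forall_mem measurableSet_Ioc fun x hx ↦ hfg x (Ioc_subset_Icc_self hx))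

theorem hasDerivAt_arctan_sqrt_div {c s : ℝ} (hc : 0 < c) (hs : 0 < s) :
    HasDerivAt (fun s ↦ 2 / c * arctan (√s / c)) (s ^ (-(1/2) : ℝ) / (c ^ 2 + s)) s := by
  refine (((hasDerivAt_sqrt hs.ne').div_const c).arctan.const_mul (2 / c)).congr_deriv ?_
  rw [rpow_neg hs.le, ← sqrt_eq_rpow]
  field_simp
  rw [sq_sqrt hs.le]

theorem intervalIntegrable_rpow_neg_half_div_add {a x : ℝ} (ha : 0 < a) (hx : 0 ≤ x) :
    IntervalIntegrable (fun s ↦ s ^ (-(1/2) : ℝ) / (a + s)) volume 0 x := by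
  simp only [div_eq_mul_inv]
  refine (intervalIntegrable_rpow' (by norm_num)).mul_continuousOn
    (ContinuousOn.inv₀ (by fun_prop) fun s hs ↦ ?_)
  rw [uIcc_of_le hx] at hs
  linarith [hs.1]

theorem integral_rpow_neg_half_div_sq_add_le {c x : ℝ} (hc : 0 < c) (hx : 0 ≤ x) :
    ∫ s in (0 : ℝ)..x, s ^ (-(1/2) : ℝ) / (c ^ 2 + s) ≤ π / c := by
  rw [integral_eq_sub_of_hasDerivAt_of_le hx (by fun_prop)
    (fun s hs ↦ hasDerivAt_arctan_sqrt_div hc hs.1)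
    (intervalIntegrable_rpow_neg_half_div_add (by positivity) hx)]
  calc 2 / c * arctan (√x / c) - 2 / c * arctan (√0 / c)
      = 2 / c * arctan (√x / c) := by simp
    _ ≤ 2 / c * (π / 2) := by gcongr; exact (arctan_lt_pi_div_two _).le
    _ = π / c := by ring

theorem rpow_neg_half_one_sub_sq_div_le {a d t : ℝ} (ha : 0 < a) (ht : t ∈ Icc (-1) 1)
    (hd : a + (1 - t) ≤ d) :
    (1 - t ^ 2) ^ (-(1/2) : ℝ) / d ≤
      (1 + t) ^ (-(1/2) : ℝ) / (a + 1) + (1 - t) ^ (-(1/2) : ℝ) / (a + (1 - t)) := by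
  obtain ⟨ht₁, ht₂⟩ := ht
  have hplus : 0 ≤ (1 + t) ^ (-(1/2) : ℝ) := rpow_nonneg (by linarith) _
  have hminus : 0 ≤ (1 - t) ^ (-(1/2) : ℝ) := rpow_nonneg (by linarith) _
  rw [show 1 - t ^ 2 = (1 - t) * (1 + t) by ring, mul_rpow (by linarith) (by linarith)]
  rcases le_or_gt t 0 with ht₀ | ht₀
  · have hle : (1 - t) ^ (-(1/2) : ℝ) ≤ 1 :=
      rpow_le_one_of_one_le_of_nonpos (by linarith) (by norm_num)
    have : (1 - t) ^ (-(1/2) : ℝ) * (1 + t) ^ (-(1/2) : ℝ) / d ≤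
        (1 + t) ^ (-(1/2) : ℝ) / (a + 1) :=
      div_le_div₀ hplus (mul_le_of_le_one_left hplus hle) (by positivity) (by linarith)
    linarith [div_nonneg hminus (by linarith : 0 ≤ a + (1 - t))]
  · have hle : (1 + t) ^ (-(1/2) : ℝ) ≤ 1 :=
      rpow_le_one_of_one_le_of_nonpos (by linarith) (by norm_num)
    have : (1 - t) ^ (-(1/2) : ℝ) * (1 + t) ^ (-(1/2) : ℝ) / d ≤
        (1 - t) ^ (-(1/2) : ℝ) / (a + (1 - t)) :=
      div_le_div₀ hminus (mul_le_of_le_one_right hminus hle) (by linarith) hd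
    linarith [div_nonneg hplus (by linarith : 0 ≤ a + 1)]

theorem integral_rpow_neg_half_one_sub_sq_div_le {c : ℝ} {d : ℝ → ℝ} (hc : 0 < c)
    (hd : ∀ t ∈ Icc (-1 : ℝ) 1, c ^ 2 + (1 - t) ≤ d t) :
    ∫ t in (-1 : ℝ)..1, (1 - t ^ 2) ^ (-(1/2) : ℝ) / d t ≤ (√2 + π) / c := by
  have hplus : IntervalIntegrable (fun t : ℝ ↦ (1 + t) ^ (-(1/2) : ℝ)) volume (-1) 1 := by
    simpa [show (2 : ℝ) - 1 = 1 by norm_num] using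
      (intervalIntegrable_rpow' (r := -(1/2)) (a := 0) (b := 2) (by norm_num)).comp_add_left 1
  have hminus : IntervalIntegrable (fun t : ℝ ↦ (1 - t) ^ (-(1/2) : ℝ) / (c ^ 2 + (1 - t)))
      volume (-1) 1 := by
    simpa [show (1 : ℝ) - 2 = -1 by norm_num] using
      ((intervalIntegrable_rpow_neg_half_div_add (a := c ^ 2) (x := 2) (by positivity)
        (by norm_num)).comp_sub_left 1).symm
  have hint_plus : ∫ t in (-1 : ℝ)..1, (1 + t) ^ (-(1/2) : ℝ) = 2 * √2 := by
    rw [integral_comp_add_left (fun s : ℝ ↦ s ^ (-(1/2) : ℝ)), integral_rpow (by norm_num)]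
    norm_num [sqrt_eq_rpow]
    ring
  have hint_minus : ∫ t in (-1 : ℝ)..1, (1 - t) ^ (-(1/2) : ℝ) / (c ^ 2 + (1 - t)) =
      ∫ s in (0 : ℝ)..2, s ^ (-(1/2) : ℝ) / (c ^ 2 + s) := by
    rw [integral_comp_sub_left (fun s : ℝ ↦ s ^ (-(1/2) : ℝ) / (c ^ 2 + s))]
    norm_num
  calc ∫ t in (-1 : ℝ)..1, (1 - t ^ 2) ^ (-(1/2) : ℝ) / d t
      ≤ ∫ t in (-1 : ℝ)..1, ((1 + t) ^ (-(1/2) : ℝ) / (c ^ 2 + 1) +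
          (1 - t) ^ (-(1/2) : ℝ) / (c ^ 2 + (1 - t))) := by
        refine integral_mono_on_of_nonneg (by norm_num) ((hplus.div_const _).add hminus)
          (fun t ht ↦ div_nonneg (rpow_nonneg ?_ _) ?_)
          (fun t ht ↦ rpow_neg_half_one_sub_sq_div_le (by positivity) ht (hd t ht))
        · nlinarith [ht.1, ht.2]
        · linarith [hd t ht, ht.2, sq_nonneg c]
    _ = 2 * √2 / (c ^ 2 + 1) + ∫ s in (0 : ℝ)..2, s ^ (-(1/2) : ℝ) / (c ^ 2 + s) := by
        rw [integral_add (hplus.div_const _) hminus, intervalIntegral.integral_div, hint_plus,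
          hint_minus]
    _ ≤ √2 / c + π / c := by
        refine add_le_add ?_ (integral_rpow_neg_half_div_sq_add_le hc (by norm_num))
        rw [div_le_div_iff₀ (by positivity) hc]
        nlinarith [mul_nonneg (sqrt_nonneg 2) (sq_nonneg (c - 1))]
    _ = (√2 + π) / c := by ring

theorem sq_add_one_sub_le {r t z : ℝ} (hr : 1 / 2 ≤ r) (ht : t ≤ 1) :
    ((|1 - r| + z) / 2) ^ 2 + (1 - t) ≤ 1 - 2 * r * t + r ^ 2 + z ^ 2 := by
  nlinarith [sq_abs (1 - r), sq_nonneg (|1 - r| - z), mul_nonneg (by linarith : 0 ≤ 2 * r - 1)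
    (by linarith : 0 ≤ 1 - t)]

/-- The case `n = 2`: the kernel
`I(r,z) = ∫_{-1}^1 (1-t²)^{-1/2} / (1-2rt+r²+z²) dt`
satisfies `I(r,z) ≤ C (|1-r| + z)⁻¹` for `r ∈ [1/2,3/2]`, `z > 0`. -/
theorem stmt5 :
    ∃ C > 0, ∀ r ∈ Icc (1/2 : ℝ) (3/2 : ℝ), ∀ z : ℝ, 0 < z →
      (∫ t in (-1 : ℝ)..1, (1 - t ^ 2) ^ (-(1/2) : ℝ) / (1 - 2*r*t + r ^ 2 + z ^ 2))
        ≤ C * (|1 - r| + z)⁻¹ := by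
  refine ⟨2 * (√2 + π), by positivity, fun r hr z hz ↦ ?_⟩
  have hb : 0 < |1 - r| + z := by positivity
  calc _ ≤ (√2 + π) / ((|1 - r| + z) / 2) :=
        integral_rpow_neg_half_one_sub_sq_div_le (half_pos hb)
          fun t ht ↦ sq_add_one_sub_le hr.1 ht.2
    _ = 2 * (√2 + π) * (|1 - r| + z)⁻¹ := by field_simp
end

section
/- Let $p \ge 1$, $\alpha \in \mathbb{R}$ with $\alpha p \neq -1$, and $f \in C_0^\infty(\mathbb{R}^n \times \mathbb{R}_+)$. Then there exists $C > 0$ such that $\left\| |(y,z)|^{\alpha} f(y,z) \right\|_{L^p(\mathbb{R}^n \times \mathbb{R}_+)} \le C \left\| |(y,z)|^{\alpha+1} \, \nabla f(y,z) \right\|_{L^p(\mathbb{R}^n \times \mathbb{R}_+)}$. -/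
open MeasureTheory Set
open scoped ENNReal

namespace Stmt9Aux

lemma sqrt_rpow_eq (x : ℝ) (hx : 0 ≤ x) (γ : ℝ) : Real.sqrt x ^ γ = x ^ (γ/2) := by
  rw [Real.sqrt_eq_rpow, ← Real.rpow_mul hx]
  congr 1
  ring

/-- Tail weight estimate: for `γ < -1`,
`∫_t^∞ (c+z²)^{γ/2} dz ≤ C (c+t²)^{(γ+1)/2}` uniformly in `c ≥ 0`. -/
lemma W1 {γ : ℝ} (hγ : γ < -1) : ∃ C : ℝ, 0 < C ∧ ∀ c : ℝ, 0 ≤ c → ∀ t : ℝ, 0 < t →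
    ∫⁻ z in Ioi t, ENNReal.ofReal ((c + z^2) ^ (γ/2))
      ≤ ENNReal.ofReal (C * (c + t^2) ^ ((γ+1)/2)) := by
  have hγ1 : (0:ℝ) < -(γ+1) := by linarith
  refine ⟨1 + (-(γ+1))⁻¹, by positivity, ?_⟩
  intro c hc t ht
  set ρ := Real.sqrt (c + t^2) with hρdef
  have hQt : 0 < c + t^2 := by positivity
  have hρpos : 0 < ρ := Real.sqrt_pos.2 hQt
  have hρsq : ρ^2 = c + t^2 := Real.sq_sqrt hQt.le
  have htρ : t ≤ ρ := by
    nlinarith [Real.sq_sqrt hQt.le, Real.sqrt_nonneg (c + t^2)]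
  have hsplit : Ioc t ρ ∪ Ioi ρ = Ioi t := Ioc_union_Ioi_eq_Ioi htρ
  have hrw : (c + t^2) ^ ((γ+1)/2) = ρ ^ (γ+1) := (sqrt_rpow_eq _ hQt.le _).symm
  -- first piece
  have h1 : ∫⁻ z in Ioc t ρ, ENNReal.ofReal ((c + z^2) ^ (γ/2))
      ≤ ENNReal.ofReal (ρ ^ (γ+1)) := by
    have hb : ∀ z ∈ Ioc t ρ, ENNReal.ofReal ((c + z^2) ^ (γ/2))
        ≤ ENNReal.ofReal (ρ ^ γ) := by
      intro z hz
      apply ENNReal.ofReal_le_ofReal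
      rw [hρdef, sqrt_rpow_eq _ hQt.le]
      apply Real.rpow_le_rpow_of_nonpos hQt (by nlinarith [hz.1.le]) (by linarith)
    calc ∫⁻ z in Ioc t ρ, ENNReal.ofReal ((c + z^2) ^ (γ/2))
        ≤ ∫⁻ _ in Ioc t ρ, ENNReal.ofReal (ρ ^ γ) := setLIntegral_mono' measurableSet_Ioc hb
      _ = ENNReal.ofReal (ρ ^ γ) * volume (Ioc t ρ) := by rw [setLIntegral_const]
      _ = ENNReal.ofReal (ρ ^ γ) * ENNReal.ofReal (ρ - t) := by rw [Real.volume_Ioc]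
      _ ≤ ENNReal.ofReal (ρ ^ γ) * ENNReal.ofReal ρ := by
          gcongr
          linarith
      _ = ENNReal.ofReal (ρ ^ γ * ρ) := (ENNReal.ofReal_mul (Real.rpow_nonneg hρpos.le _)).symm
      _ = ENNReal.ofReal (ρ ^ (γ+1)) := by rw [Real.rpow_add_one hρpos.ne']
  -- second piece
  have h2 : ∫⁻ z in Ioi ρ, ENNReal.ofReal ((c + z^2) ^ (γ/2))
      ≤ ENNReal.ofReal ((-(γ+1))⁻¹ * ρ ^ (γ+1)) := by
    have hb : ∀ z ∈ Ioi ρ, ENNReal.ofReal ((c + z^2) ^ (γ/2))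
        ≤ ENNReal.ofReal (z ^ γ) := by
      intro z hz
      have hzpos : 0 < z := hρpos.trans hz
      apply ENNReal.ofReal_le_ofReal
      have : (z:ℝ)^γ = (z^2 : ℝ) ^ (γ/2) := by
        rw [← Real.rpow_natCast z 2, ← Real.rpow_mul hzpos.le]
        congr 1; ring
      rw [this]
      apply Real.rpow_le_rpow_of_nonpos (by positivity) (by linarith) (by linarith)
    have hInt : IntegrableOn (fun z : ℝ => z ^ γ) (Ioi ρ) := integrableOn_Ioi_rpow_of_lt hγ hρpos
    calc ∫⁻ z in Ioi ρ, ENNReal.ofReal ((c + z^2) ^ (γ/2))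
        ≤ ∫⁻ z in Ioi ρ, ENNReal.ofReal (z ^ γ) := setLIntegral_mono' measurableSet_Ioi hb
      _ = ENNReal.ofReal (∫ z in Ioi ρ, z ^ γ) := by
          rw [ofReal_integral_eq_lintegral_ofReal hInt]
          filter_upwards [ae_restrict_mem measurableSet_Ioi] with z hz
          exact Real.rpow_nonneg (hρpos.trans hz).le _
      _ = ENNReal.ofReal ((-(γ+1))⁻¹ * ρ ^ (γ+1)) := by
          rw [integral_Ioi_rpow_of_lt hγ hρpos]
          congr 1
          rw [inv_neg, neg_mul, inv_mul_eq_div, neg_div]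
  calc ∫⁻ z in Ioi t, ENNReal.ofReal ((c + z^2) ^ (γ/2))
      = (∫⁻ z in Ioc t ρ, ENNReal.ofReal ((c + z^2) ^ (γ/2)))
        + ∫⁻ z in Ioi ρ, ENNReal.ofReal ((c + z^2) ^ (γ/2)) := by
        rw [← hsplit, lintegral_union measurableSet_Ioi Ioc_disjoint_Ioi_same]
    _ ≤ ENNReal.ofReal (ρ ^ (γ+1)) + ENNReal.ofReal ((-(γ+1))⁻¹ * ρ ^ (γ+1)) := add_le_add h1 h2
    _ = ENNReal.ofReal ((1 + (-(γ+1))⁻¹) * (c + t^2) ^ ((γ+1)/2)) := by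
        rw [← ENNReal.ofReal_add (Real.rpow_nonneg hρpos.le _)
          (by positivity), hrw]
        congr 1
        ring

lemma sqrt_rpow_eq' (x : ℝ) (hx : 0 ≤ x) (γ : ℝ) : Real.sqrt x ^ γ = x ^ (γ/2) := by
  rw [Real.sqrt_eq_rpow, ← Real.rpow_mul hx]; congr 1; ring

/-- Head weight estimate: for `γ > -1`,
`∫_0^t (c+z²)^{γ/2} dz ≤ C (c+t²)^{(γ+1)/2}` uniformly in `c ≥ 0`. -/
lemma W2 {γ : ℝ} (hγ : -1 < γ) : ∃ C : ℝ, 0 < C ∧ ∀ c : ℝ, 0 ≤ c → ∀ t : ℝ, 0 < t →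
    ∫⁻ z in Ioc 0 t, ENNReal.ofReal ((c + z^2) ^ (γ/2))
      ≤ ENNReal.ofReal (C * (c + t^2) ^ ((γ+1)/2)) := by
  have hγ1 : (0:ℝ) < γ + 1 := by linarith
  refine ⟨1 + (γ+1)⁻¹, by positivity, ?_⟩
  intro c hc t ht
  set ρ := Real.sqrt (c + t^2) with hρdef
  have hQt : 0 < c + t^2 := by positivity
  have hρpos : 0 < ρ := Real.sqrt_pos.2 hQt
  have htρ : t ≤ ρ := by
    nlinarith [Real.sq_sqrt hQt.le, Real.sqrt_nonneg (c + t^2)]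
  have hrw : (c + t^2) ^ ((γ+1)/2) = ρ ^ (γ+1) := (sqrt_rpow_eq' _ hQt.le _).symm
  have hρ1 : ENNReal.ofReal (ρ ^ (γ+1)) ≤ ENNReal.ofReal ((1 + (γ+1)⁻¹) * (c + t^2) ^ ((γ+1)/2)) := by
    apply ENNReal.ofReal_le_ofReal
    rw [hrw]
    nlinarith [Real.rpow_pos_of_pos hρpos (γ+1), inv_pos.2 hγ1]
  rcases le_or_gt 0 γ with hγ0 | hγ0
  · -- γ ≥ 0 : bound integrand by ρ^γ
    have hb : ∀ z ∈ Ioc 0 t, ENNReal.ofReal ((c + z^2) ^ (γ/2))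
        ≤ ENNReal.ofReal (ρ ^ γ) := by
      intro z hz
      apply ENNReal.ofReal_le_ofReal
      rw [hρdef, sqrt_rpow_eq' _ hQt.le]
      apply Real.rpow_le_rpow (by positivity) (by nlinarith [hz.1, hz.2]) (by linarith)
    calc ∫⁻ z in Ioc 0 t, ENNReal.ofReal ((c + z^2) ^ (γ/2))
        ≤ ∫⁻ _ in Ioc 0 t, ENNReal.ofReal (ρ ^ γ) := setLIntegral_mono' measurableSet_Ioc hb
      _ = ENNReal.ofReal (ρ ^ γ) * volume (Ioc 0 t) := by rw [setLIntegral_const]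
      _ = ENNReal.ofReal (ρ ^ γ) * ENNReal.ofReal (t - 0) := by rw [Real.volume_Ioc]
      _ ≤ ENNReal.ofReal (ρ ^ γ) * ENNReal.ofReal ρ := by gcongr; linarith
      _ = ENNReal.ofReal (ρ ^ γ * ρ) := (ENNReal.ofReal_mul (Real.rpow_nonneg hρpos.le _)).symm
      _ = ENNReal.ofReal (ρ ^ (γ+1)) := by rw [Real.rpow_add_one hρpos.ne']
      _ ≤ _ := hρ1
  · -- -1 < γ < 0 : bound integrand by z^γ
    have hb : ∀ z ∈ Ioc 0 t, ENNReal.ofReal ((c + z^2) ^ (γ/2))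
        ≤ ENNReal.ofReal (z ^ γ) := by
      intro z hz
      apply ENNReal.ofReal_le_ofReal
      have hzpos : 0 < z := hz.1
      have : (z:ℝ)^γ = (z^2 : ℝ) ^ (γ/2) := by
        rw [← Real.rpow_natCast z 2, ← Real.rpow_mul hzpos.le]
        congr 1; ring
      rw [this]
      exact Real.rpow_le_rpow_of_nonpos (by positivity) (by nlinarith) (by linarith)
    have hInt : IntegrableOn (fun z : ℝ => z ^ γ) (Ioc 0 t) := by
      have := (intervalIntegral.intervalIntegrable_rpow' (a := 0) (b := t) hγ)
      rw [intervalIntegrable_iff, uIoc_of_le ht.le] at this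
      exact this
    calc ∫⁻ z in Ioc 0 t, ENNReal.ofReal ((c + z^2) ^ (γ/2))
        ≤ ∫⁻ z in Ioc 0 t, ENNReal.ofReal (z ^ γ) := setLIntegral_mono' measurableSet_Ioc hb
      _ = ENNReal.ofReal (∫ z in Ioc 0 t, z ^ γ) := by
          rw [ofReal_integral_eq_lintegral_ofReal hInt]
          filter_upwards [ae_restrict_mem measurableSet_Ioc] with z hz
          exact Real.rpow_nonneg hz.1.le _
      _ ≤ ENNReal.ofReal ((1 + (γ+1)⁻¹) * (c + t^2) ^ ((γ+1)/2)) := by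
          apply ENNReal.ofReal_le_ofReal
          rw [← intervalIntegral.integral_of_le ht.le,
            integral_rpow (Or.inl hγ)]
          have h1 : t ^ (γ+1) ≤ ρ ^ (γ+1) := Real.rpow_le_rpow ht.le htρ (by linarith)
          have h2 : (0:ℝ) ≤ ρ ^ (γ+1) := Real.rpow_nonneg hρpos.le _
          rw [hrw, Real.zero_rpow (by linarith)]
          rw [div_le_iff₀ hγ1]
          nlinarith [mul_inv_cancel₀ hγ1.ne']
  

/-- Tonelli-type swap: `∫_{z>0} u(z) ∫_{0<t≤z} v(t) dt dz = ∫_{t>0} v(t) ∫_{z>t} u(z) dz dt`. -/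
lemma swap1 (u v : ℝ → ℝ≥0∞) (hu : Measurable u) (hv : Measurable v) :
    ∫⁻ z in Ioi 0, u z * ∫⁻ t in Ioc 0 z, v t
      = ∫⁻ t in Ioi 0, v t * ∫⁻ z in Ioi t, u z := by
  have hS : MeasurableSet {q : ℝ × ℝ | 0 < q.2 ∧ q.2 ≤ q.1} :=
    (measurableSet_lt measurable_const measurable_snd).inter
      (measurableSet_le measurable_snd measurable_fst)
  set F : ℝ → ℝ → ℝ≥0∞ := fun z t =>
    {q : ℝ × ℝ | 0 < q.2 ∧ q.2 ≤ q.1}.indicator (fun q => u q.1 * v q.2) (z, t) with hF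
  have hFeval : ∀ z t, F z t = if 0 < t ∧ t ≤ z then u z * v t else 0 := by
    intro z t
    simp [hF, Set.indicator_apply]
  have hFm : AEMeasurable (Function.uncurry F) ((volume : Measure ℝ).prod volume) := by
    apply Measurable.aemeasurable
    apply Measurable.indicator _ hS
    exact (hu.comp measurable_fst).mul (hv.comp measurable_snd)
  have h1 : ∫⁻ z in Ioi 0, u z * ∫⁻ t in Ioc 0 z, v t = ∫⁻ z, ∫⁻ t, F z t := by
    rw [← lintegral_indicator measurableSet_Ioi]
    congr 1
    funext z
    rcases le_or_gt z 0 with hz | hz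
    · rw [indicator_of_notMem (by simpa using hz)]
      symm
      rw [← lintegral_zero]
      congr 1
      funext t
      rw [hFeval]
      apply if_neg
      rintro ⟨h1, h2⟩; linarith
    · rw [indicator_of_mem (by simpa using hz),
        ← lintegral_indicator measurableSet_Ioc,
        ← lintegral_const_mul _ (hv.indicator measurableSet_Ioc)]
      congr 1
      funext t
      rw [hFeval, Set.indicator_apply]
      by_cases h : t ∈ Ioc 0 z
      · rw [if_pos h, if_pos ⟨h.1, h.2⟩]
      · rw [if_neg h, if_neg (by simpa [mem_Ioc] using h), mul_zero]
  have h2 : ∫⁻ t in Ioi 0, v t * ∫⁻ z in Ici t, u z = ∫⁻ t, ∫⁻ z, F z t := by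
    rw [← lintegral_indicator measurableSet_Ioi]
    congr 1
    funext t
    rcases le_or_gt t 0 with ht | ht
    · rw [indicator_of_notMem (by simpa using ht)]
      symm
      rw [← lintegral_zero]
      congr 1
      funext z
      rw [hFeval]
      apply if_neg
      rintro ⟨h1, h2⟩; linarith
    · rw [indicator_of_mem (by simpa using ht),
        ← lintegral_indicator measurableSet_Ici,
        ← lintegral_const_mul _ (hu.indicator measurableSet_Ici)]
      congr 1
      funext z
      rw [hFeval, Set.indicator_apply]
      by_cases h : z ∈ Ici t
      · rw [if_pos h, if_pos ⟨ht, h⟩, mul_comm]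
      · rw [if_neg h, if_neg (fun hc => h (mem_Ici.2 hc.2)), mul_zero]
  calc ∫⁻ z in Ioi 0, u z * ∫⁻ t in Ioc 0 z, v t
      = ∫⁻ z, ∫⁻ t, F z t := h1
    _ = ∫⁻ t, ∫⁻ z, F z t := lintegral_lintegral_swap hFm
    _ = ∫⁻ t in Ioi 0, v t * ∫⁻ z in Ici t, u z := h2.symm
    _ = ∫⁻ t in Ioi 0, v t * ∫⁻ z in Ioi t, u z := by
        apply lintegral_congr
        intro t
        rw [Measure.restrict_congr_set Ioi_ae_eq_Ici]

/-- Mirror swap: `∫_{z>0} u(z) ∫_{t>z} v(t) dt dz = ∫_{t>0} v(t) ∫_{0<z≤t} u(z) dz dt`. -/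
lemma swap2 (u v : ℝ → ℝ≥0∞) (hu : Measurable u) (hv : Measurable v) :
    ∫⁻ z in Ioi 0, u z * ∫⁻ t in Ioi z, v t
      = ∫⁻ t in Ioi 0, v t * ∫⁻ z in Ioc 0 t, u z := by
  rw [← swap1 v u hv hu]

/-- Abstract core of the 1-D weighted Hardy inequality, `p > 1` case. -/
lemma core {p q α c m C₁ C₂ : ℝ} (hpq : p.HolderConjugate q) (hc : 0 ≤ c)
    (hC₁ : 0 ≤ C₁) (hC₂ : 0 ≤ C₂)
    {g : ℝ → ℝ} (hg'c : Continuous (deriv g))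
    {S S' : ℝ → Set ℝ}
    (hSmeas : ∀ z, MeasurableSet (S z))
    (hSsub : ∀ z, 0 < z → S z ⊆ Ioi 0)
    (hgb : ∀ z, 0 < z → ENNReal.ofReal |g z| ≤ ∫⁻ t in S z, ENNReal.ofReal |deriv g t|)
    (hA : ∀ z, 0 < z → ∫⁻ t in S z, ENNReal.ofReal ((c + t^2) ^ ((-(m*q))/2))
        ≤ ENNReal.ofReal (C₁ * (c + z^2) ^ ((1 - m*q)/2)))
    (hswap : ∀ u v' : ℝ → ℝ≥0∞, Measurable u → Measurable v' →
      ∫⁻ z in Ioi 0, u z * ∫⁻ t in S z, v' t = ∫⁻ t in Ioi 0, v' t * ∫⁻ z in S' t, u z)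
    (hT : ∀ t : ℝ, 0 < t →
        ∫⁻ z in S' t, ENNReal.ofReal ((c + z^2) ^ ((α*p + (1 - m*q)*(p-1))/2))
        ≤ ENNReal.ofReal (C₂ * (c + t^2) ^ ((α*p + (1 - m*q)*(p-1) + 1)/2))) :
    ∫⁻ z in Ioi 0, ENNReal.ofReal (((c + z^2) ^ (α/2) * |g z|) ^ p)
      ≤ ENNReal.ofReal (C₁ ^ (p-1) * C₂)
        * ∫⁻ z in Ioi 0, ENNReal.ofReal (((c + z^2) ^ ((α+1)/2) * |deriv g z|) ^ p) := by
  have hp1 : 1 < p := hpq.lt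
  have hp0 : 0 < p := hpq.pos
  have hq0 : 0 < q := hpq.symm.pos
  have hp1' : 0 ≤ p - 1 := by linarith
  have hqp : (p - 1) * q = p := hpq.sub_one_mul_conj
  have hpq' : p / q = p - 1 := hpq.div_conj_eq_sub_one
  set E : ℝ := α*p + (1 - m*q)*(p-1) with hE
  have hexp : m*p + (E + 1) = (α+1)*p := by
    rw [hE]; linear_combination (-m) * hqp
  have hQ : ∀ t : ℝ, 0 ≤ c + t^2 := fun t => add_nonneg hc (sq_nonneg t)
  have hQpos : ∀ t : ℝ, 0 < t → 0 < c + t^2 :=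
    fun t ht => add_pos_of_nonneg_of_pos hc (by positivity)
  have hQm : Measurable fun t : ℝ => c + t^2 := by fun_prop
  set V : ℝ → ℝ≥0∞ := fun t => ENNReal.ofReal (|deriv g t| * (c + t^2) ^ (m/2)) with hV
  set Sm : ℝ → ℝ≥0∞ := fun t => ENNReal.ofReal ((c + t^2) ^ (-(m/2))) with hSm
  have hVm : Measurable V := by
    apply ENNReal.measurable_ofReal.comp
    fun_prop
  have hSmm : Measurable Sm := by
    apply ENNReal.measurable_ofReal.comp
    fun_prop
  set U : ℝ → ℝ≥0∞ := fun z => ENNReal.ofReal ((c + z^2) ^ (E/2)) with hU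
  have hUm : Measurable U := by
    apply ENNReal.measurable_ofReal.comp
    fun_prop
  have hVpm : Measurable fun t => V t ^ p := hVm.pow_const p
  -- `Sm t ^ q` is the weight in `hA`
  have hSmq : ∀ t : ℝ, Sm t ^ q = ENNReal.ofReal ((c + t^2) ^ ((-(m*q))/2)) := by
    intro t
    rw [hSm]
    rw [ENNReal.ofReal_rpow_of_nonneg (Real.rpow_nonneg (hQ t) _) hq0.le,
      ← Real.rpow_mul (hQ t)]
    congr 2
    ring
  -- pointwise bound on the LHS integrand
  have hpt : ∀ z : ℝ, 0 < z →
      ENNReal.ofReal (((c + z^2) ^ (α/2) * |g z|) ^ p)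
        ≤ ENNReal.ofReal (C₁ ^ (p-1)) * (U z * ∫⁻ t in S z, V t ^ p) := by
    intro z hz
    have hQz := hQpos z hz
    -- |g'| = V * Sm on S z
    have hgsplit : ∫⁻ t in S z, ENNReal.ofReal |deriv g t| = ∫⁻ t in S z, (V * Sm) t := by
      apply setLIntegral_congr_fun_ae (hSmeas z)
      apply ae_of_all
      intro t ht
      have htpos : 0 < t := hSsub z hz ht
      have hQt := hQpos t htpos
      simp only [hV, hSm, Pi.mul_apply]
      rw [← ENNReal.ofReal_mul (by positivity), mul_assoc, ← Real.rpow_add hQt]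
      norm_num
    -- Hölder
    have hHolder : ∫⁻ t in S z, (V * Sm) t
        ≤ (∫⁻ t in S z, V t ^ p) ^ (1/p) * (∫⁻ t in S z, Sm t ^ q) ^ (1/q) :=
      ENNReal.lintegral_mul_le_Lp_mul_Lq _ hpq hVm.aemeasurable hSmm.aemeasurable
    have hAz : (∫⁻ t in S z, Sm t ^ q) ≤ ENNReal.ofReal (C₁ * (c + z^2) ^ ((1 - m*q)/2)) := by
      calc ∫⁻ t in S z, Sm t ^ q
          = ∫⁻ t in S z, ENNReal.ofReal ((c + t^2) ^ ((-(m*q))/2)) := by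
            apply lintegral_congr; intro t; exact hSmq t
        _ ≤ _ := hA z hz
    have hgz : ENNReal.ofReal |g z|
        ≤ (∫⁻ t in S z, V t ^ p) ^ (1/p)
          * (ENNReal.ofReal (C₁ * (c + z^2) ^ ((1 - m*q)/2))) ^ (1/q) := by
      refine le_trans (hgb z hz) ?_
      rw [hgsplit]
      refine le_trans hHolder ?_
      gcongr
    -- raise to the p-th power
    have hgzp : (ENNReal.ofReal |g z|) ^ p
        ≤ (∫⁻ t in S z, V t ^ p)
          * ENNReal.ofReal (C₁ ^ (p-1) * (c + z^2) ^ ((1 - m*q)*(p-1)/2)) := by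
      calc (ENNReal.ofReal |g z|) ^ p
          ≤ ((∫⁻ t in S z, V t ^ p) ^ (1/p)
            * (ENNReal.ofReal (C₁ * (c + z^2) ^ ((1 - m*q)/2))) ^ (1/q)) ^ p :=
            ENNReal.rpow_le_rpow hgz hp0.le
        _ = (∫⁻ t in S z, V t ^ p)
            * (ENNReal.ofReal (C₁ * (c + z^2) ^ ((1 - m*q)/2))) ^ ((1/q)*p) := by
            rw [ENNReal.mul_rpow_of_nonneg _ _ hp0.le, ← ENNReal.rpow_mul, ← ENNReal.rpow_mul,
              one_div_mul_cancel hp0.ne', ENNReal.rpow_one]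
        _ = (∫⁻ t in S z, V t ^ p)
            * ENNReal.ofReal (C₁ ^ (p-1) * (c + z^2) ^ ((1 - m*q)*(p-1)/2)) := by
            congr 1
            have h1 : (1/q)*p = p - 1 := by
              rw [one_div, inv_mul_eq_div, hpq']
            rw [h1, ENNReal.ofReal_rpow_of_nonneg
              (mul_nonneg hC₁ (Real.rpow_nonneg (hQ z) _)) hp1',
              Real.mul_rpow hC₁ (Real.rpow_nonneg (hQ z) _), ← Real.rpow_mul (hQ z)]
            congr 2
            ring
    calc ENNReal.ofReal (((c + z^2) ^ (α/2) * |g z|) ^ p)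
        = ENNReal.ofReal ((c + z^2) ^ (α*p/2)) * (ENNReal.ofReal |g z|) ^ p := by
          rw [Real.mul_rpow (Real.rpow_nonneg (hQ z) _) (abs_nonneg _),
            ← Real.rpow_mul (hQ z),
            ENNReal.ofReal_mul (Real.rpow_nonneg (hQ z) _),
            ENNReal.ofReal_rpow_of_nonneg (abs_nonneg _) hp0.le]
          congr 3
          ring
      _ ≤ ENNReal.ofReal ((c + z^2) ^ (α*p/2))
          * ((∫⁻ t in S z, V t ^ p)
            * ENNReal.ofReal (C₁ ^ (p-1) * (c + z^2) ^ ((1 - m*q)*(p-1)/2))) := by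
          gcongr
      _ = ENNReal.ofReal (C₁ ^ (p-1)) * (U z * ∫⁻ t in S z, V t ^ p) := by
          have hUz : ENNReal.ofReal ((c + z^2) ^ (α*p/2))
              * ENNReal.ofReal ((c + z^2) ^ ((1 - m*q)*(p-1)/2)) = U z := by
            rw [← ENNReal.ofReal_mul (Real.rpow_nonneg (hQ z) _), ← Real.rpow_add hQz]
            simp only [hU]
            congr 1
            rw [hE]
            ring
          rw [ENNReal.ofReal_mul (Real.rpow_nonneg hC₁ _), ← hUz]
          ring
  calc ∫⁻ z in Ioi 0, ENNReal.ofReal (((c + z^2) ^ (α/2) * |g z|) ^ p)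
      ≤ ∫⁻ z in Ioi 0, ENNReal.ofReal (C₁ ^ (p-1)) * (U z * ∫⁻ t in S z, V t ^ p) :=
        setLIntegral_mono' measurableSet_Ioi (fun z hz => hpt z hz)
    _ = ENNReal.ofReal (C₁ ^ (p-1)) * ∫⁻ z in Ioi 0, U z * ∫⁻ t in S z, V t ^ p :=
        lintegral_const_mul' _ _ ENNReal.ofReal_ne_top
    _ = ENNReal.ofReal (C₁ ^ (p-1)) * ∫⁻ t in Ioi 0, (V t ^ p) * ∫⁻ z in S' t, U z := by
        rw [hswap U (fun t => V t ^ p) hUm hVpm]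
    _ ≤ ENNReal.ofReal (C₁ ^ (p-1)) * ∫⁻ t in Ioi 0,
          (V t ^ p) * ENNReal.ofReal (C₂ * (c + t^2) ^ ((E+1)/2)) := by
        refine mul_le_mul_right (setLIntegral_mono' measurableSet_Ioi (fun t ht => ?_)) _
        exact mul_le_mul_right (hT t ht) _
    _ = ENNReal.ofReal (C₁ ^ (p-1)) * ∫⁻ t in Ioi 0,
          ENNReal.ofReal C₂ * ENNReal.ofReal (((c + t^2) ^ ((α+1)/2) * |deriv g t|) ^ p) := by
        congr 1
        apply setLIntegral_congr_fun_ae measurableSet_Ioi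
        apply ae_of_all
        intro t ht
        have hQt := hQpos t ht
        have hVt : V t ^ p = ENNReal.ofReal ((|deriv g t| * (c + t^2) ^ (m/2)) ^ p) := by
          simp only [hV]
          rw [ENNReal.ofReal_rpow_of_nonneg
            (mul_nonneg (abs_nonneg _) (Real.rpow_nonneg (hQ t) _)) hp0.le]
        rw [hVt, ← ENNReal.ofReal_mul
          (Real.rpow_nonneg (mul_nonneg (abs_nonneg _) (Real.rpow_nonneg (hQ t) _)) _),
          ← ENNReal.ofReal_mul hC₂]
        congr 1
        have h3 : (c + t^2) ^ ((m/2)*p) * (c + t^2) ^ ((E+1)/2)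
            = (c + t^2) ^ (((α+1)/2)*p) := by
          rw [← Real.rpow_add hQt]
          congr 1
          linarith [hexp]
        rw [Real.mul_rpow (abs_nonneg _) (Real.rpow_nonneg (hQ t) _),
          Real.mul_rpow (Real.rpow_nonneg (hQ t) _) (abs_nonneg _),
          ← Real.rpow_mul (hQ t), ← Real.rpow_mul (hQ t)]
        linear_combination (|deriv g t| ^ p * C₂) * h3
    _ = ENNReal.ofReal (C₁ ^ (p-1) * C₂)
          * ∫⁻ z in Ioi 0, ENNReal.ofReal (((c + z^2) ^ ((α+1)/2) * |deriv g z|) ^ p) := by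
        rw [lintegral_const_mul' _ _ ENNReal.ofReal_ne_top, ← mul_assoc,
          ← ENNReal.ofReal_mul (Real.rpow_nonneg hC₁ _)]

lemma ftc_left {g : ℝ → ℝ} (hg : ContDiff ℝ (⊤ : ℕ∞) g) (h0 : g 0 = 0) {z : ℝ} (hz : 0 < z) :
    ENNReal.ofReal |g z| ≤ ∫⁻ t in Ioc 0 z, ENNReal.ofReal |deriv g t| := by
  have hder : ∀ x ∈ uIcc (0:ℝ) z, HasDerivAt g (deriv g x) x :=
    fun x _ => (hg.differentiable (by simp) x).hasDerivAt
  have hctsd : Continuous (deriv g) := hg.continuous_deriv (by simp)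
  have hint : IntervalIntegrable (deriv g) volume 0 z := hctsd.intervalIntegrable _ _
  have heq : ∫ t in (0:ℝ)..z, deriv g t = g z - g 0 :=
    intervalIntegral.integral_eq_sub_of_hasDerivAt hder hint
  have habs : |g z| ≤ ∫ t in Ioc 0 z, |deriv g t| := by
    rw [← intervalIntegral.integral_of_le hz.le]
    calc |g z| = |∫ t in (0:ℝ)..z, deriv g t| := by rw [heq, h0, sub_zero]
      _ ≤ ∫ t in (0:ℝ)..z, |deriv g t| :=
          intervalIntegral.abs_integral_le_integral_abs hz.le
  calc ENNReal.ofReal |g z| ≤ ENNReal.ofReal (∫ t in Ioc 0 z, |deriv g t|) :=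
        ENNReal.ofReal_le_ofReal habs
    _ = ∫⁻ t in Ioc 0 z, ENNReal.ofReal |deriv g t| := by
        rw [ofReal_integral_eq_lintegral_ofReal (hctsd.abs.integrableOn_Ioc)]
        exact ae_of_all _ (fun t => abs_nonneg _)

lemma ftc_right {g : ℝ → ℝ} (hg : ContDiff ℝ (⊤ : ℕ∞) g) (hcs : HasCompactSupport g) {z : ℝ}
    (hz : 0 < z) :
    ENNReal.ofReal |g z| ≤ ∫⁻ t in Ioi z, ENNReal.ofReal |deriv g t| := by
  obtain ⟨M, hM⟩ := hcs.isBounded.subset_closedBall 0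
  set R : ℝ := max M z + 1 with hR
  have hzR : z < R := by
    have : z ≤ max M z := le_max_right _ _
    linarith
  have hRpos : 0 < R := hz.trans hzR
  have hgR : g R = 0 := by
    apply image_eq_zero_of_notMem_tsupport
    intro hmem
    have h1 := hM hmem
    simp only [Metric.mem_closedBall, Real.dist_eq, sub_zero] at h1
    have h2 : M ≤ max M z := le_max_left _ _
    rw [abs_of_pos hRpos] at h1
    linarith
  have hder : ∀ x ∈ uIcc z R, HasDerivAt g (deriv g x) x :=
    fun x _ => (hg.differentiable (by simp) x).hasDerivAt
  have hctsd : Continuous (deriv g) := hg.continuous_deriv (by simp)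
  have hint : IntervalIntegrable (deriv g) volume z R := hctsd.intervalIntegrable _ _
  have heq : ∫ t in z..R, deriv g t = g R - g z :=
    intervalIntegral.integral_eq_sub_of_hasDerivAt hder hint
  have habs : |g z| ≤ ∫ t in Ioc z R, |deriv g t| := by
    rw [← intervalIntegral.integral_of_le hzR.le]
    calc |g z| = |∫ t in z..R, deriv g t| := by
          rw [heq, hgR, zero_sub, abs_neg]
      _ ≤ ∫ t in z..R, |deriv g t| :=
          intervalIntegral.abs_integral_le_integral_abs hzR.le
  calc ENNReal.ofReal |g z| ≤ ENNReal.ofReal (∫ t in Ioc z R, |deriv g t|) :=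
        ENNReal.ofReal_le_ofReal habs
    _ = ∫⁻ t in Ioc z R, ENNReal.ofReal |deriv g t| := by
        rw [ofReal_integral_eq_lintegral_ofReal (hctsd.abs.integrableOn_Ioc)]
        exact ae_of_all _ (fun t => abs_nonneg _)
    _ ≤ ∫⁻ t in Ioi z, ENNReal.ofReal |deriv g t| :=
        lintegral_mono_set Ioc_subset_Ioi_self

lemma hardy1D {p α : ℝ} (hp : 1 ≤ p) (hα : α * p ≠ -1) :
    ∃ K : ℝ, 0 < K ∧ ∀ c : ℝ, 0 ≤ c → ∀ g : ℝ → ℝ, ContDiff ℝ (⊤ : ℕ∞) g → HasCompactSupport g →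
      (∀ z ≤ (0:ℝ), g z = 0) →
      ∫⁻ z in Ioi 0, ENNReal.ofReal (((c + z^2) ^ (α/2) * |g z|) ^ p)
        ≤ ENNReal.ofReal K *
          ∫⁻ z in Ioi 0, ENNReal.ofReal (((c + z^2) ^ ((α+1)/2) * |deriv g z|) ^ p) := by
  rcases eq_or_lt_of_le hp with hp1 | hp1
  · -- p = 1
    subst hp1
    rw [mul_one] at hα
    rcases lt_or_gt_of_ne hα with hcase | hcase
    · -- α < -1 : integrate from the left
      obtain ⟨C₂, hC₂pos, hW1⟩ := W1 hcase
      refine ⟨C₂, hC₂pos, ?_⟩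
      intro c hc g hg hcs hzero
      have hQ : ∀ t : ℝ, 0 ≤ c + t^2 := fun t => add_nonneg hc (sq_nonneg t)
      have hUm : Measurable fun z : ℝ => ENNReal.ofReal ((c + z^2) ^ (α/2)) := by
        apply ENNReal.measurable_ofReal.comp; fun_prop
      have hVm : Measurable fun t : ℝ => ENNReal.ofReal |deriv g t| := by
        apply ENNReal.measurable_ofReal.comp; fun_prop
      calc ∫⁻ z in Ioi 0, ENNReal.ofReal (((c + z^2) ^ (α/2) * |g z|) ^ (1:ℝ))
          = ∫⁻ z in Ioi 0, ENNReal.ofReal ((c + z^2) ^ (α/2)) * ENNReal.ofReal |g z| := by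
            apply setLIntegral_congr_fun_ae measurableSet_Ioi
            apply ae_of_all
            intro z hz
            rw [Real.rpow_one, ENNReal.ofReal_mul (Real.rpow_nonneg (hQ z) _)]
        _ ≤ ∫⁻ z in Ioi 0, ENNReal.ofReal ((c + z^2) ^ (α/2))
              * ∫⁻ t in Ioc 0 z, ENNReal.ofReal |deriv g t| :=
            setLIntegral_mono' measurableSet_Ioi
              (fun z hz => mul_le_mul_right (ftc_left hg (hzero 0 le_rfl) hz) _)
        _ = ∫⁻ t in Ioi 0, ENNReal.ofReal |deriv g t|
              * ∫⁻ z in Ioi t, ENNReal.ofReal ((c + z^2) ^ (α/2)) := swap1 _ _ hUm hVm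
        _ ≤ ∫⁻ t in Ioi 0, ENNReal.ofReal |deriv g t|
              * ENNReal.ofReal (C₂ * (c + t^2) ^ ((α+1)/2)) :=
            setLIntegral_mono' measurableSet_Ioi
              (fun t ht => mul_le_mul_right (hW1 c hc t ht) _)
        _ = ENNReal.ofReal C₂
              * ∫⁻ t in Ioi 0, ENNReal.ofReal (((c + t^2) ^ ((α+1)/2) * |deriv g t|) ^ (1:ℝ)) := by
            rw [← lintegral_const_mul' _ _ ENNReal.ofReal_ne_top]
            apply setLIntegral_congr_fun_ae measurableSet_Ioi
            apply ae_of_all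
            intro t ht
            rw [Real.rpow_one, ENNReal.ofReal_mul hC₂pos.le,
              ENNReal.ofReal_mul (Real.rpow_nonneg (hQ t) _)]
            ring
    · -- α > -1 : integrate from the right
      obtain ⟨C₂, hC₂pos, hW2⟩ := W2 hcase
      refine ⟨C₂, hC₂pos, ?_⟩
      intro c hc g hg hcs hzero
      have hQ : ∀ t : ℝ, 0 ≤ c + t^2 := fun t => add_nonneg hc (sq_nonneg t)
      have hUm : Measurable fun z : ℝ => ENNReal.ofReal ((c + z^2) ^ (α/2)) := by
        apply ENNReal.measurable_ofReal.comp; fun_prop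
      have hVm : Measurable fun t : ℝ => ENNReal.ofReal |deriv g t| := by
        apply ENNReal.measurable_ofReal.comp; fun_prop
      calc ∫⁻ z in Ioi 0, ENNReal.ofReal (((c + z^2) ^ (α/2) * |g z|) ^ (1:ℝ))
          = ∫⁻ z in Ioi 0, ENNReal.ofReal ((c + z^2) ^ (α/2)) * ENNReal.ofReal |g z| := by
            apply setLIntegral_congr_fun_ae measurableSet_Ioi
            apply ae_of_all
            intro z hz
            rw [Real.rpow_one, ENNReal.ofReal_mul (Real.rpow_nonneg (hQ z) _)]
        _ ≤ ∫⁻ z in Ioi 0, ENNReal.ofReal ((c + z^2) ^ (α/2))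
              * ∫⁻ t in Ioi z, ENNReal.ofReal |deriv g t| :=
            setLIntegral_mono' measurableSet_Ioi
              (fun z hz => mul_le_mul_right (ftc_right hg hcs hz) _)
        _ = ∫⁻ t in Ioi 0, ENNReal.ofReal |deriv g t|
              * ∫⁻ z in Ioc 0 t, ENNReal.ofReal ((c + z^2) ^ (α/2)) := swap2 _ _ hUm hVm
        _ ≤ ∫⁻ t in Ioi 0, ENNReal.ofReal |deriv g t|
              * ENNReal.ofReal (C₂ * (c + t^2) ^ ((α+1)/2)) :=
            setLIntegral_mono' measurableSet_Ioi
              (fun t ht => mul_le_mul_right (hW2 c hc t ht) _)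
        _ = ENNReal.ofReal C₂
              * ∫⁻ t in Ioi 0, ENNReal.ofReal (((c + t^2) ^ ((α+1)/2) * |deriv g t|) ^ (1:ℝ)) := by
            rw [← lintegral_const_mul' _ _ ENNReal.ofReal_ne_top]
            apply setLIntegral_congr_fun_ae measurableSet_Ioi
            apply ae_of_all
            intro t ht
            rw [Real.rpow_one, ENNReal.ofReal_mul hC₂pos.le,
              ENNReal.ofReal_mul (Real.rpow_nonneg (hQ t) _)]
            ring
  · -- 1 < p
    have hpq := Real.HolderConjugate.conjExponent hp1
    set q := p.conjExponent with hqdef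
    have hq' : q = p / (p - 1) := hpq.conjugate_eq
    have hp0 : 0 < p := hpq.pos
    have hp1' : 0 < p - 1 := by linarith
    have hq0 : 0 < q := hpq.symm.pos
    set δ := (1 - (α+1)*q)/(2*q) with hδ
    set m := α + 1 + δ with hm
    have hδq : δ * q = (1 - (α+1)*q)/2 := by
      rw [hδ]; field_simp
    have hmq : m * q = (1 + (α+1)*q)/2 := by
      rw [hm]; linear_combination hδq
    have hqp : (p-1) * q = p := hpq.sub_one_mul_conj
    have hE : α*p + (1 - m*q)*(p-1) = -δ*p - 1 := by
      rw [hm]; linear_combination (-(α + 1 + δ)) * hqp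
    have hrw : (α+1) * (p/(p-1)) = ((α+1)*p)/(p-1) := by ring
    rcases lt_or_gt_of_ne hα with hcase | hcase
    · -- α p < -1
      have h1 : (α+1)*q < 1 := by
        rw [hq', hrw, div_lt_one hp1']; linarith
      have hδpos : 0 < δ := by
        rw [hδ]; apply div_pos <;> linarith
      have hmq1 : m*q < 1 := by rw [hmq]; linarith
      obtain ⟨C₁, hC₁pos, hW2⟩ := W2 (γ := -(m*q)) (by linarith)
      obtain ⟨C₂, hC₂pos, hW1⟩ := W1 (γ := α*p + (1 - m*q)*(p-1))
        (by rw [hE]; nlinarith)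
      refine ⟨C₁^(p-1) * C₂, by positivity, ?_⟩
      intro c hc g hg hcs hzero
      apply core hpq hc hC₁pos.le hC₂pos.le (hg.continuous_deriv (by simp))
        (S := fun z => Ioc 0 z) (S' := fun t => Ioi t)
      · exact fun z => measurableSet_Ioc
      · exact fun z hz => Ioc_subset_Ioi_self
      · exact fun z hz => ftc_left hg (hzero 0 le_rfl) hz
      · intro z hz
        rw [show (1 - m*q)/2 = (-(m*q)+1)/2 by ring]
        exact hW2 c hc z hz
      · exact fun u v hu hv => swap1 u v hu hv
      · exact fun t ht => hW1 c hc t ht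
    · -- α p > -1
      have h1 : 1 < (α+1)*q := by
        rw [hq', hrw, one_lt_div hp1']; linarith
      have hδneg : δ < 0 := by
        rw [hδ]; apply div_neg_of_neg_of_pos <;> linarith
      have hmq1 : 1 < m*q := by rw [hmq]; linarith
      obtain ⟨C₁, hC₁pos, hW1⟩ := W1 (γ := -(m*q)) (by linarith)
      obtain ⟨C₂, hC₂pos, hW2⟩ := W2 (γ := α*p + (1 - m*q)*(p-1))
        (by rw [hE]; nlinarith)
      refine ⟨C₁^(p-1) * C₂, by positivity, ?_⟩
      intro c hc g hg hcs hzero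
      apply core hpq hc hC₁pos.le hC₂pos.le (hg.continuous_deriv (by simp))
        (S := fun z => Ioi z) (S' := fun t => Ioc 0 t)
      · exact fun z => measurableSet_Ioi
      · exact fun z hz => Ioi_subset_Ioi hz.le
      · exact fun z hz => ftc_right hg hcs hz
      · intro z hz
        rw [show (1 - m*q)/2 = (-(m*q)+1)/2 by ring]
        exact hW1 c hc z hz
      · exact fun u v hu hv => swap2 u v hu hv
      · exact fun t ht => hW2 c hc t ht

lemma zero_on_nonpos {n : ℕ} {F : Type*} [NormedAddCommGroup F]
    (h : (EuclideanSpace ℝ (Fin n) × ℝ) → F) (hcont : Continuous h)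
    (hsupp : tsupport h ⊆ {w : EuclideanSpace ℝ (Fin n) × ℝ | 0 ≤ w.2}) :
    ∀ w : EuclideanSpace ℝ (Fin n) × ℝ, w.2 ≤ 0 → h w = 0 := by
  have hEq : EqOn h 0 {w : EuclideanSpace ℝ (Fin n) × ℝ | w.2 < 0} := by
    intro w hw
    apply image_eq_zero_of_notMem_tsupport
    intro hmem
    have := hsupp hmem
    simp only [mem_setOf_eq] at this hw
    linarith
  have hcl : EqOn h 0 (closure {w : EuclideanSpace ℝ (Fin n) × ℝ | w.2 < 0}) :=
    hEq.closure hcont continuous_const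
  intro w hw
  have : w ∈ closure {w : EuclideanSpace ℝ (Fin n) × ℝ | w.2 < 0} := by
    rw [Metric.mem_closure_iff]
    intro ε hε
    refine ⟨(w.1, w.2 - ε/2), by simp only [mem_setOf_eq]; linarith, ?_⟩
    rw [Prod.dist_eq]
    simp only [dist_self, Real.dist_eq]
    rw [show w.2 - (w.2 - ε/2) = ε/2 by ring] 
    rw [abs_of_pos (by linarith)]
    rw [max_eq_right (by linarith)]
    linarith
  exact hcl this

lemma vanish {n : ℕ} : ∀ (k : ℕ) {F : Type} [NormedAddCommGroup F] [NormedSpace ℝ F] [CompleteSpace F]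
    (h : (EuclideanSpace ℝ (Fin n) × ℝ) → F), ContDiff ℝ (⊤ : ℕ∞) h → HasCompactSupport h →
    tsupport h ⊆ {w : EuclideanSpace ℝ (Fin n) × ℝ | 0 ≤ w.2} →
    ∃ C : ℝ, 0 ≤ C ∧ ∀ w : EuclideanSpace ℝ (Fin n) × ℝ, 0 ≤ w.2 → ‖h w‖ ≤ C * w.2 ^ k := by
  intro k
  induction k with
  | zero =>
    intro F _ _ _ h hsm hcs hsupp
    obtain ⟨C, hC⟩ := hsm.continuous.bounded_above_of_compact_support hcs
    refine ⟨max C 0, le_max_right _ _, ?_⟩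
    intro w hw
    rw [pow_zero, mul_one]
    exact (hC w).trans (le_max_left _ _)
  | succ k ih =>
    intro F _ _ _ h hsm hcs hsupp
    have hsm' : ContDiff ℝ (⊤ : ℕ∞) (fderiv ℝ h) := hsm.fderiv_right (by simp)
    have hcs' : HasCompactSupport (fderiv ℝ h) := hcs.fderiv ℝ
    have hsupp' : tsupport (fderiv ℝ h) ⊆ {w : EuclideanSpace ℝ (Fin n) × ℝ | 0 ≤ w.2} :=
      (closure_minimal (support_fderiv_subset ℝ) (isClosed_tsupport h)).trans hsupp
    obtain ⟨C, hC0, hC⟩ := ih (fderiv ℝ h) hsm' hcs' hsupp'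
    refine ⟨C, hC0, ?_⟩
    rintro ⟨y, z⟩ hw
    simp only at hw
    have hd : ∀ s : ℝ, HasDerivAt (fun s : ℝ => h (y, s))
        ((fderiv ℝ h (y, s)) (0, 1)) s := by
      intro s
      have h1 : HasFDerivAt h (fderiv ℝ h (y, s)) (y, s) :=
        (hsm.differentiable (by simp) (y, s)).hasFDerivAt
      have h2 : HasDerivAt (fun s : ℝ => ((y, s) : EuclideanSpace ℝ (Fin n) × ℝ))
          ((0 : EuclideanSpace ℝ (Fin n)), (1:ℝ)) s :=
        (hasDerivAt_const s y).prodMk (hasDerivAt_id s)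
      exact h1.comp_hasDerivAt s h2
    have h0 : h (y, 0) = 0 := zero_on_nonpos h hsm.continuous hsupp (y, 0) le_rfl
    have hDcont : Continuous fun s : ℝ =>
        (fderiv ℝ h (y, s)) ((0 : EuclideanSpace ℝ (Fin n)), (1:ℝ)) := by
      apply Continuous.clm_apply _ continuous_const
      exact (hsm'.continuous).comp (continuous_const.prodMk continuous_id)
    have heq : ∫ s in (0:ℝ)..z, (fderiv ℝ h (y, s)) (0, 1) = h (y, z) - h (y, 0) :=
      intervalIntegral.integral_eq_sub_of_hasDerivAt (fun s _ => hd s)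
        (hDcont.intervalIntegrable _ _)
    have hbound : ∀ s ∈ Icc (0:ℝ) z,
        ‖(fderiv ℝ h (y, s)) ((0 : EuclideanSpace ℝ (Fin n)), (1:ℝ))‖ ≤ C * s ^ k := by
      intro s hs
      calc ‖(fderiv ℝ h (y, s)) ((0 : EuclideanSpace ℝ (Fin n)), (1:ℝ))‖
          ≤ ‖fderiv ℝ h (y, s)‖ * ‖((0 : EuclideanSpace ℝ (Fin n)), (1:ℝ))‖ :=
            ContinuousLinearMap.le_opNorm _ _
        _ = ‖fderiv ℝ h (y, s)‖ := by
            rw [Prod.norm_def]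
            simp
        _ ≤ C * s ^ k := hC (y, s) hs.1
    calc ‖h (y, z)‖ = ‖∫ s in (0:ℝ)..z, (fderiv ℝ h (y, s)) (0, 1)‖ := by
          rw [heq, h0, sub_zero]
      _ ≤ ∫ s in (0:ℝ)..z, ‖(fderiv ℝ h (y, s)) (0, 1)‖ :=
          intervalIntegral.norm_integral_le_integral_norm hw
      _ ≤ ∫ s in (0:ℝ)..z, C * s ^ k := by
          apply intervalIntegral.integral_mono_on hw
            (hDcont.norm.intervalIntegrable _ _)
            ((continuous_const.mul (continuous_pow k)).intervalIntegrable _ _)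
          exact hbound
      _ = C * ((z ^ (k+1) - 0 ^ (k+1)) / (k + 1)) := by
          rw [intervalIntegral.integral_const_mul, integral_pow]
      _ ≤ C * z ^ (k+1) := by
          apply mul_le_mul_of_nonneg_left _ hC0
          rw [zero_pow (Nat.succ_ne_zero k), sub_zero]
          apply div_le_self (pow_nonneg hw _)
          push_cast
          linarith [Nat.cast_nonneg (α := ℝ) k]

lemma finiteness {n : ℕ} {p α : ℝ} (hp : 0 < p)
    (f : EuclideanSpace ℝ (Fin n) × ℝ → ℝ) (hf : ContDiff ℝ (⊤ : ℕ∞) f) (hcs : HasCompactSupport f)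
    (hsupp : tsupport f ⊆ {w : EuclideanSpace ℝ (Fin n) × ℝ | 0 ≤ w.2}) :
    ∫⁻ w in {w : EuclideanSpace ℝ (Fin n) × ℝ | 0 < w.2},
      ENNReal.ofReal (((‖w.1‖^2 + w.2^2) ^ ((α+1)/2) * ‖fderiv ℝ f w‖) ^ p) < ⊤ := by
  set k : ℕ := ⌈-(α+1)⌉₊ with hkdef
  have hk : 0 ≤ α + 1 + (k:ℝ) := by
    have := Nat.le_ceil (-(α+1))
    rw [← hkdef] at this
    linarith
  have hsupp' : tsupport (fderiv ℝ f) ⊆ {w : EuclideanSpace ℝ (Fin n) × ℝ | 0 ≤ w.2} :=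
    (closure_minimal (support_fderiv_subset ℝ) (isClosed_tsupport f)).trans hsupp
  obtain ⟨C, hC0, hC⟩ := vanish k (fderiv ℝ f) (hf.fderiv_right (by simp)) (hcs.fderiv ℝ) hsupp'
  obtain ⟨R, hR⟩ := hcs.isBounded.subset_closedBall 0
  set R₁ : ℝ := max (2*R^2) 1 + max R 0 with hR₁def
  have hR₁1 : 1 ≤ R₁ := by
    have h1 : (1:ℝ) ≤ max (2*R^2) 1 := le_max_right _ _
    have h2 : (0:ℝ) ≤ max R 0 := le_max_right _ _
    linarith
  have hR₁pos : 0 < R₁ := by linarith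
  set M : ℝ := C * R₁ ^ (α+1+(k:ℝ)) with hMdef
  have hM0 : 0 ≤ M := mul_nonneg hC0 (Real.rpow_nonneg hR₁pos.le _)
  have hSmeas : MeasurableSet {w : EuclideanSpace ℝ (Fin n) × ℝ | 0 < w.2} :=
    measurableSet_lt measurable_const measurable_snd
  have hbd : ∀ w ∈ {w : EuclideanSpace ℝ (Fin n) × ℝ | 0 < w.2},
      ENNReal.ofReal (((‖w.1‖^2 + w.2^2) ^ ((α+1)/2) * ‖fderiv ℝ f w‖) ^ p)
        ≤ (tsupport f).indicator (fun _ => ENNReal.ofReal (M ^ p)) w := by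
    intro w hw
    simp only [mem_setOf_eq] at hw
    by_cases hmem : w ∈ tsupport f
    · rw [indicator_of_mem hmem]
      apply ENNReal.ofReal_le_ofReal
      set y := w.1
      set z := w.2
      set Q : ℝ := ‖y‖^2 + z^2 with hQdef
      have hz : 0 < z := hw
      have hQpos : 0 < Q := by positivity
      have hzQ : z^2 ≤ Q := le_add_of_nonneg_left (sq_nonneg _)
      have hwR : ‖w‖ ≤ R := by
        have := hR hmem
        rwa [Metric.mem_closedBall, dist_zero_right] at this
      have hy : ‖y‖ ≤ R := (norm_fst_le w).trans hwR
      have hz2 : |z| ≤ R := by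
        have := (norm_snd_le w).trans hwR
        rwa [Real.norm_eq_abs] at this
      have hQR₁ : Q ≤ R₁ := by
        have h1 : Q ≤ 2*R^2 := by
          rw [hQdef]
          nlinarith [abs_nonneg z, norm_nonneg y, sq_abs z]
        have h2 : 2*R^2 ≤ max (2*R^2) 1 := le_max_left _ _
        have h3 : (0:ℝ) ≤ max R 0 := le_max_right _ _
        linarith
      have hzR₁ : z ≤ R₁ := by
        have h1 : z ≤ R := (le_abs_self z).trans hz2
        have h2 : R ≤ max R 0 := le_max_left _ _
        have h3 : (0:ℝ) ≤ max (2*R^2) 1 := le_trans zero_le_one (le_max_right _ _)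
        linarith
      have hDf : ‖fderiv ℝ f w‖ ≤ C * z ^ k := hC w hz.le
      have htgt : Q ^ ((α+1)/2) * ‖fderiv ℝ f w‖ ≤ M := by
        rcases le_or_gt 0 (α+1) with hα1 | hα1
        · have e1 : Q ^ ((α+1)/2) ≤ R₁ ^ (α+1) := by
            calc Q ^ ((α+1)/2) ≤ R₁ ^ ((α+1)/2) :=
                  Real.rpow_le_rpow hQpos.le hQR₁ (by linarith)
              _ ≤ R₁ ^ (α+1) :=
                  Real.rpow_le_rpow_of_exponent_le hR₁1 (by linarith)
          have e2 : (z:ℝ) ^ k ≤ R₁ ^ (k:ℝ) := by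
            rw [← Real.rpow_natCast z k]
            exact Real.rpow_le_rpow hz.le hzR₁ (Nat.cast_nonneg k)
          calc Q ^ ((α+1)/2) * ‖fderiv ℝ f w‖
              ≤ Q ^ ((α+1)/2) * (C * z ^ k) := by
                apply mul_le_mul_of_nonneg_left hDf (Real.rpow_nonneg hQpos.le _)
            _ ≤ R₁ ^ (α+1) * (C * R₁ ^ (k:ℝ)) := by
                apply mul_le_mul e1 (by
                  apply mul_le_mul_of_nonneg_left e2 hC0)
                  (by positivity) (Real.rpow_nonneg hR₁pos.le _)
            _ = M := by
                rw [hMdef, Real.rpow_add hR₁pos (α+1) (k:ℝ)]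
                ring
        · have e1 : Q ^ ((α+1)/2) ≤ z ^ (α+1) := by
            have : (z:ℝ) ^ (α+1) = (z^2 : ℝ) ^ ((α+1)/2) := by
              rw [← Real.rpow_natCast z 2, ← Real.rpow_mul hz.le]
              congr 1; ring
            rw [this]
            exact Real.rpow_le_rpow_of_nonpos (by positivity) hzQ (by linarith)
          calc Q ^ ((α+1)/2) * ‖fderiv ℝ f w‖
              ≤ Q ^ ((α+1)/2) * (C * z ^ k) := by
                apply mul_le_mul_of_nonneg_left hDf (Real.rpow_nonneg hQpos.le _)
            _ ≤ z ^ (α+1) * (C * z ^ k) := by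
                apply mul_le_mul_of_nonneg_right e1 (by positivity)
            _ = C * z ^ (α+1+(k:ℝ)) := by
                rw [Real.rpow_add hz (α+1) (k:ℝ), ← Real.rpow_natCast z k]
                ring
            _ ≤ M := by
                rw [hMdef]
                apply mul_le_mul_of_nonneg_left _ hC0
                exact Real.rpow_le_rpow hz.le hzR₁ hk
      exact Real.rpow_le_rpow (by positivity) htgt hp.le
    · rw [indicator_of_notMem hmem]
      have hnot : w ∉ tsupport (fderiv ℝ f) := fun hc =>
        hmem ((closure_minimal (support_fderiv_subset ℝ) (isClosed_tsupport f)) hc)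
      have hD0 : fderiv ℝ f w = 0 := image_eq_zero_of_notMem_tsupport hnot
      rw [hD0]
      simp only [norm_zero, mul_zero]
      rw [Real.zero_rpow hp.ne']
      simp
  calc ∫⁻ w in {w : EuclideanSpace ℝ (Fin n) × ℝ | 0 < w.2},
        ENNReal.ofReal (((‖w.1‖^2 + w.2^2) ^ ((α+1)/2) * ‖fderiv ℝ f w‖) ^ p)
      ≤ ∫⁻ w in {w : EuclideanSpace ℝ (Fin n) × ℝ | 0 < w.2},
          (tsupport f).indicator (fun _ => ENNReal.ofReal (M ^ p)) w :=
        setLIntegral_mono' hSmeas hbd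
    _ ≤ ∫⁻ w, (tsupport f).indicator (fun _ => ENNReal.ofReal (M ^ p)) w :=
        setLIntegral_le_lintegral _ _
    _ = ENNReal.ofReal (M ^ p) * volume (tsupport f) := by
        rw [lintegral_indicator_const (isClosed_tsupport f).measurableSet]
    _ < ⊤ := ENNReal.mul_lt_top ENNReal.ofReal_lt_top hcs.measure_lt_top

end Stmt9Aux

open Stmt9Aux in
/-- Hardy-type inequality on the half-space:
`‖ |(y,z)|^α f ‖_{L^p(ℝ^n × ℝ_+)} ≤ C ‖ |(y,z)|^{α+1} ∇f ‖_{L^p(ℝ^n × ℝ_+)}`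
for `f ∈ C_0^∞(ℝ^n × ℝ_+)`, `p ≥ 1`, `αp ≠ -1`. -/
theorem stmt9 (n : ℕ) (p α : ℝ) (hp : 1 ≤ p) (hα : α * p ≠ -1) :
    ∃ C > 0, ∀ f : EuclideanSpace ℝ (Fin n) × ℝ → ℝ,
      ContDiff ℝ (⊤ : ℕ∞) f → HasCompactSupport f →
      tsupport f ⊆ {w : EuclideanSpace ℝ (Fin n) × ℝ | 0 ≤ w.2} →
      (∫ w in {w : EuclideanSpace ℝ (Fin n) × ℝ | 0 < w.2},
          ((‖w.1‖ ^ 2 + w.2 ^ 2) ^ (α / 2) * |f w|) ^ p) ^ (1 / p)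
        ≤ C * (∫ w in {w : EuclideanSpace ℝ (Fin n) × ℝ | 0 < w.2},
            ((‖w.1‖ ^ 2 + w.2 ^ 2) ^ ((α + 1) / 2) * ‖fderiv ℝ f w‖) ^ p) ^ (1 / p) := by
  have hp0 : 0 < p := lt_of_lt_of_le zero_lt_one hp
  obtain ⟨K, hK, hHardy⟩ := hardy1D hp hα
  refine ⟨K ^ (1/p), Real.rpow_pos_of_pos hK _, ?_⟩
  intro f hf hcs hsupp
  set S : Set (EuclideanSpace ℝ (Fin n) × ℝ) := {w | 0 < w.2} with hSdef
  have hSmeas : MeasurableSet S := measurableSet_lt measurable_const measurable_snd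
  set F₁ : EuclideanSpace ℝ (Fin n) × ℝ → ℝ := fun w => ((‖w.1‖ ^ 2 + w.2 ^ 2) ^ (α / 2) * |f w|) ^ p with hF₁
  set F₂ : EuclideanSpace ℝ (Fin n) × ℝ → ℝ := fun w => ((‖w.1‖ ^ 2 + w.2 ^ 2) ^ ((α + 1) / 2) * ‖fderiv ℝ f w‖) ^ p
    with hF₂
  have hfc : Continuous f := hf.continuous
  have hfm : Measurable f := hfc.measurable
  have hDc : Continuous (fderiv ℝ f) := hf.continuous_fderiv (by simp)
  have hDm : Measurable (fderiv ℝ f) := hDc.measurable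
  have hF₁m : Measurable F₁ := by
    rw [hF₁]; fun_prop
  have hF₂m : Measurable F₂ := by
    rw [hF₂]; fun_prop
  have hF₁nn : ∀ w, 0 ≤ F₁ w := fun w => Real.rpow_nonneg
    (mul_nonneg (Real.rpow_nonneg (by positivity) _) (abs_nonneg _)) _
  have hF₂nn : ∀ w, 0 ≤ F₂ w := fun w => Real.rpow_nonneg
    (mul_nonneg (Real.rpow_nonneg (by positivity) _) (norm_nonneg _)) _
  set X : ℝ≥0∞ := ∫⁻ w in S, ENNReal.ofReal (F₁ w) with hX
  set Y : ℝ≥0∞ := ∫⁻ w in S, ENNReal.ofReal (F₂ w) with hY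
  -- identify the Bochner integrals with lintegrals
  have hI₁ : ∫ w in S, F₁ w = X.toReal := by
    rw [hX, integral_eq_lintegral_of_nonneg_ae (ae_of_all _ hF₁nn)
      (hF₁m.aestronglyMeasurable)]
  have hI₂ : ∫ w in S, F₂ w = Y.toReal := by
    rw [hY, integral_eq_lintegral_of_nonneg_ae (ae_of_all _ hF₂nn)
      (hF₂m.aestronglyMeasurable)]
  -- product structure
  have hprodS : S = (univ : Set (EuclideanSpace ℝ (Fin n))) ×ˢ Ioi (0:ℝ) := by
    ext w
    simp [hSdef, Set.mem_prod]
  have hvol : (volume : Measure (EuclideanSpace ℝ (Fin n) × ℝ)).restrict S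
      = (volume : Measure (EuclideanSpace ℝ (Fin n))).prod ((volume : Measure ℝ).restrict (Ioi 0)) := by
    rw [hprodS, Measure.volume_eq_prod, ← Measure.prod_restrict, Measure.restrict_univ]
  have hFub₁ : X = ∫⁻ y, ∫⁻ z in Ioi 0, ENNReal.ofReal (F₁ (y, z)) := by
    rw [hX, hvol]
    exact lintegral_prod _ (ENNReal.measurable_ofReal.comp hF₁m).aemeasurable
  have hFub₂ : Y = ∫⁻ y, ∫⁻ z in Ioi 0, ENNReal.ofReal (F₂ (y, z)) := by
    rw [hY, hvol]
    exact lintegral_prod _ (ENNReal.measurable_ofReal.comp hF₂m).aemeasurable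
  -- slicewise Hardy inequality
  have hslice : ∀ y : EuclideanSpace ℝ (Fin n), ∫⁻ z in Ioi 0, ENNReal.ofReal (F₁ (y, z))
      ≤ ENNReal.ofReal K * ∫⁻ z in Ioi 0, ENNReal.ofReal (F₂ (y, z)) := by
    intro y
    set g : ℝ → ℝ := fun z => f (y, z) with hg
    have hgsm : ContDiff ℝ (⊤ : ℕ∞) g := hf.comp (contDiff_const.prodMk contDiff_id)
    have hgcs : HasCompactSupport g := by
      obtain ⟨R, hR⟩ := hcs.isBounded.subset_closedBall 0
      apply HasCompactSupport.intro (isCompact_Icc (a := -R) (b := R))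
      intro z hz
      simp only [mem_Icc, not_and_or, not_le] at hz
      show f (y, z) = 0
      apply image_eq_zero_of_notMem_tsupport
      intro hmem
      have h1 := hR hmem
      rw [Metric.mem_closedBall, dist_zero_right] at h1
      have h2 : |z| ≤ R := by
        have := (norm_snd_le ((y, z) : EuclideanSpace ℝ (Fin n) × ℝ)).trans h1
        rwa [Real.norm_eq_abs] at this
      rw [abs_le] at h2
      rcases hz with hz | hz <;> linarith [h2.1, h2.2]
    have hgzero : ∀ z ≤ (0:ℝ), g z = 0 := fun z hz =>
      zero_on_nonpos f hfc hsupp (y, z) hz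
    have hder : ∀ z : ℝ, |deriv g z| ≤ ‖fderiv ℝ f (y, z)‖ := by
      intro z
      have hD : HasDerivAt g ((fderiv ℝ f (y, z)) ((0 : EuclideanSpace ℝ (Fin n)), (1:ℝ))) z := by
        have h1 : HasFDerivAt f (fderiv ℝ f (y, z)) (y, z) :=
          (hf.differentiable (by simp) (y, z)).hasFDerivAt
        have h2 : HasDerivAt (fun z : ℝ => ((y, z) : EuclideanSpace ℝ (Fin n) × ℝ)) ((0 : EuclideanSpace ℝ (Fin n)), (1:ℝ)) z :=
          (hasDerivAt_const z y).prodMk (hasDerivAt_id z)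
        exact h1.comp_hasDerivAt z h2
      rw [hD.deriv, ← Real.norm_eq_abs]
      calc ‖(fderiv ℝ f (y, z)) ((0 : EuclideanSpace ℝ (Fin n)), (1:ℝ))‖
          ≤ ‖fderiv ℝ f (y, z)‖ * ‖((0 : EuclideanSpace ℝ (Fin n)), (1:ℝ))‖ := ContinuousLinearMap.le_opNorm _ _
        _ = ‖fderiv ℝ f (y, z)‖ := by
            rw [Prod.norm_def]
            simp
    calc ∫⁻ z in Ioi 0, ENNReal.ofReal (F₁ (y, z))
        = ∫⁻ z in Ioi 0, ENNReal.ofReal (((‖y‖^2 + z^2) ^ (α/2) * |g z|) ^ p) := rfl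
      _ ≤ ENNReal.ofReal K
            * ∫⁻ z in Ioi 0, ENNReal.ofReal (((‖y‖^2 + z^2) ^ ((α+1)/2) * |deriv g z|) ^ p) :=
          hHardy (‖y‖^2) (by positivity) g hgsm hgcs hgzero
      _ ≤ ENNReal.ofReal K * ∫⁻ z in Ioi 0, ENNReal.ofReal (F₂ (y, z)) := by
          apply mul_le_mul_right
          apply setLIntegral_mono' measurableSet_Ioi
          intro z hz
          apply ENNReal.ofReal_le_ofReal
          apply Real.rpow_le_rpow
            (mul_nonneg (Real.rpow_nonneg (by positivity) _) (abs_nonneg _)) _ hp0.le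
          exact mul_le_mul_of_nonneg_left (hder z) (Real.rpow_nonneg (by positivity) _)
  have hXY : X ≤ ENNReal.ofReal K * Y := by
    rw [hFub₁, hFub₂, ← lintegral_const_mul' _ _ ENNReal.ofReal_ne_top]
    exact lintegral_mono hslice
  have hYfin : Y < ⊤ := finiteness hp0 f hf hcs hsupp
  have htoReal : X.toReal ≤ K * Y.toReal := by
    have h1 : ENNReal.ofReal K * Y ≠ ⊤ := ENNReal.mul_ne_top ENNReal.ofReal_ne_top hYfin.ne
    have h2 := ENNReal.toReal_mono h1 hXY
    rwa [ENNReal.toReal_mul, ENNReal.toReal_ofReal hK.le] at h2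
  rw [hI₁, hI₂]
  calc X.toReal ^ (1/p) ≤ (K * Y.toReal) ^ (1/p) :=
      Real.rpow_le_rpow ENNReal.toReal_nonneg htoReal (by positivity)
    _ = K ^ (1/p) * Y.toReal ^ (1/p) := Real.mul_rpow hK.le ENNReal.toReal_nonneg
end

section
/- Let $n \ge 2$, $1 \le p \le r < \infty$, and $\alpha, \gamma \in \mathbb{R}$ satisfy the scaling relation $\frac{1}{r} + \frac{\gamma}{n} = \frac{1}{p} + \frac{\alpha - 1}{n}$, together with $\frac{1}{r} + \frac{\gamma}{n} > 0$ and $(n-1)\left(\frac{1}{r} - \frac{1}{p}\right) \le \alpha - \gamma \le 0$ (strict left inequality if $p = 1$). Then there exists $C > 0$ such that for all radially symmetric $u \in C_0^\infty(\mathbb{R}^n)$, $\left\| |x|^{\gamma} u \right\|_{L^r(\mathbb{R}^n)} \le C \left\| |x|^{\alpha} \nabla u \right\|_{L^p(\mathbb{R}^n)}$. -/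
open MeasureTheory Set Topology Filter

namespace CKN

lemma rpow_le_max {ε R c t : ℝ} (hε : 0 < ε) (h1 : ε ≤ t) (h2 : t ≤ R) :
    t ^ c ≤ max (ε ^ c) (R ^ c) := by
  rcases le_or_gt 0 c with hc | hc
  · exact le_max_of_le_right (Real.rpow_le_rpow (by linarith) h2 hc)
  · refine le_max_of_le_left ?_
    rw [Real.rpow_def_of_pos hε, Real.rpow_def_of_pos (by linarith)]
    exact Real.exp_le_exp.2 (mul_le_mul_of_nonpos_right
      (Real.log_le_log hε h1) hc.le)

/-- integrability of `s^σ * g s` on `(0,∞)` for continuous `g` vanishing beyond `R`. -/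
lemma integrableOn_rpow_mul {σ R : ℝ} (hσ : -1 < σ) (hR : 0 < R) {g : ℝ → ℝ}
    (hgc : Continuous g) (hgR : ∀ s, R ≤ s → g s = 0) :
    IntegrableOn (fun s => s ^ σ * g s) (Ioi (0:ℝ)) := by
  rw [← Ioc_union_Ioi_eq_Ioi hR.le]
  refine IntegrableOn.union ?_ ?_
  · obtain ⟨C, hC⟩ := (isCompact_Icc (a := (0:ℝ)) (b := R)).exists_bound_of_continuousOn
      hgc.continuousOn
    have hrint : IntegrableOn (fun s : ℝ => s ^ σ) (Ioc (0:ℝ) R) := by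
      have := (intervalIntegral.intervalIntegrable_rpow' (a := 0) (b := R) hσ)
      rwa [intervalIntegrable_iff, uIoc_of_le hR.le] at this
    refine Integrable.mono' (hrint.const_mul C) ?_ ?_
    · refine ContinuousOn.aestronglyMeasurable ?_ measurableSet_Ioc
      refine ContinuousOn.mul ?_ hgc.continuousOn
      intro s hs
      exact (Real.continuousAt_rpow_const s σ (Or.inl (ne_of_gt hs.1))).continuousWithinAt
    · filter_upwards [ae_restrict_mem measurableSet_Ioc] with s hs
      have hs0 : (0:ℝ) < s := hs.1
      have h1 : |s ^ σ * g s| = s ^ σ * |g s| := by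
        rw [abs_mul, abs_of_nonneg (Real.rpow_nonneg hs0.le σ)]
      rw [Real.norm_eq_abs, h1, mul_comm C]
      exact mul_le_mul_of_nonneg_left (hC s ⟨hs0.le, hs.2⟩) (Real.rpow_nonneg hs0.le σ)
  · refine integrableOn_zero.congr_fun (fun s hs => ?_) measurableSet_Ioi
    simp [hgR s (le_of_lt hs)]


/-- Pointwise bound `F t ≤ K t^{-(σ+1)/p} A`. -/
lemma pointwise_bound {p σ : ℝ} (hp : 1 ≤ p) (hσ : -1 < σ) :
    ∃ K : ℝ, 0 < K ∧ ∀ R : ℝ, 0 < R → ∀ f : ℝ → ℝ, Continuous f → (∀ s, 0 ≤ f s) →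
      (∀ s, R ≤ s → f s = 0) → ∀ t : ℝ, 0 < t →
      (∫ s in t..R, f s) ≤ K * t ^ (-((σ + 1) / p)) *
        (∫ s in Ioi (0:ℝ), s ^ (σ + p) * f s ^ p) ^ (1/p) := by
  have hp0 : (0:ℝ) < p := lt_of_lt_of_le one_pos hp
  have hσ1 : (0:ℝ) < σ + 1 := by linarith
  rcases eq_or_lt_of_le hp with hp1 | hp1
  · -- p = 1
    refine ⟨1, one_pos, ?_⟩
    intro R hR f hfc hf0 hfR t ht
    subst hp1
    simp only [div_one, one_mul, Real.rpow_one]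
    have hAint : IntegrableOn (fun s => s ^ (σ+1) * f s) (Ioi (0:ℝ)) :=
      integrableOn_rpow_mul (by linarith) hR hfc hfR
    have hA0 : 0 ≤ ∫ s in Ioi (0:ℝ), s ^ (σ+1) * f s :=
      setIntegral_nonneg measurableSet_Ioi
        (fun s hs => mul_nonneg (Real.rpow_nonneg (le_of_lt hs) _) (hf0 s))
    rcases le_or_gt t R with htR | htR
    · have hsub : Ioc t R ⊆ Ioi (0:ℝ) := fun s hs => lt_trans ht hs.1
      have h2 : (∫ s in Ioc t R, f s) ≤
          ∫ s in Ioc t R, t ^ (-(σ+1)) * (s ^ (σ+1) * f s) := by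
        refine setIntegral_mono_on hfc.integrableOn_Ioc
          ((hAint.mono_set hsub).const_mul _) measurableSet_Ioc ?_
        intro s hs
        have h3 : 1 ≤ t ^ (-(σ+1)) * s ^ (σ+1) := by
          rw [Real.rpow_neg ht.le, ← div_eq_inv_mul, le_div_iff₀ (Real.rpow_pos_of_pos ht _)]
          rw [one_mul]
          exact Real.rpow_le_rpow ht.le hs.1.le hσ1.le
        calc f s = 1 * f s := (one_mul _).symm
          _ ≤ (t ^ (-(σ+1)) * s ^ (σ+1)) * f s :=
              mul_le_mul_of_nonneg_right h3 (hf0 s)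
          _ = t ^ (-(σ+1)) * (s ^ (σ+1) * f s) := by ring
      have h4 : (∫ s in Ioc t R, t ^ (-(σ+1)) * (s ^ (σ+1) * f s)) =
          t ^ (-(σ+1)) * ∫ s in Ioc t R, s ^ (σ+1) * f s := integral_const_mul _ _
      have h5 : (∫ s in Ioc t R, s ^ (σ+1) * f s) ≤ ∫ s in Ioi (0:ℝ), s ^ (σ+1) * f s := by
        refine setIntegral_mono_set hAint ?_ hsub.eventuallyLE
        filter_upwards [ae_restrict_mem measurableSet_Ioi] with s hs
        exact mul_nonneg (Real.rpow_nonneg (le_of_lt hs) _) (hf0 s)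
      rw [intervalIntegral.integral_of_le htR]
      calc (∫ s in Ioc t R, f s) ≤ _ := h2
        _ = _ := h4
        _ ≤ t ^ (-(σ+1)) * ∫ s in Ioi (0:ℝ), s ^ (σ+1) * f s :=
            mul_le_mul_of_nonneg_left h5 (Real.rpow_nonneg ht.le _)
    · have hFt : (∫ s in t..R, f s) = 0 := by
        rw [intervalIntegral.integral_congr (g := fun _ => (0:ℝ)) ?_]
        · simp
        · intro s hs
          rw [uIcc_of_ge htR.le] at hs
          exact hfR s hs.1
      rw [hFt]
      exact mul_nonneg (Real.rpow_nonneg ht.le _) hA0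
  · -- 1 < p
    set q : ℝ := Real.conjExponent p with hq
    have hpq : p.HolderConjugate q := Real.HolderConjugate.conjExponent hp1
    have hq0 : 0 < q := hpq.symm.pos
    have hp1' : (0:ℝ) < p - 1 := by linarith
    set e : ℝ := (σ + p)/(p - 1) with he
    have he1 : 1 < e := by
      rw [lt_div_iff₀ hp1']; linarith
    have hKpos : (0:ℝ) < (e - 1) ^ (-(1/q)) :=
      Real.rpow_pos_of_pos (by linarith) _
    refine ⟨(e - 1) ^ (-(1/q)), hKpos, ?_⟩
    intro R hR f hfc hf0 hfR t ht
    have hσp : (0:ℝ) < σ + p := by linarith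
    have hAint : IntegrableOn (fun s => s ^ (σ+p) * f s ^ p) (Ioi (0:ℝ)) := by
      refine integrableOn_rpow_mul (by linarith) hR
        (hfc.rpow_const (fun x => Or.inr hp0.le)) ?_
      intro s hs
      rw [hfR s hs, Real.zero_rpow (ne_of_gt hp0)]
    have hAintnn : 0 ≤ ∫ s in Ioi (0:ℝ), s ^ (σ+p) * f s ^ p :=
      setIntegral_nonneg measurableSet_Ioi (fun s hs =>
        mul_nonneg (Real.rpow_nonneg (le_of_lt hs) _) (Real.rpow_nonneg (hf0 s) _))
    set A : ℝ := (∫ s in Ioi (0:ℝ), s ^ (σ+p) * f s ^ p) ^ (1/p) with hA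
    have hA0 : 0 ≤ A := Real.rpow_nonneg hAintnn _
    rcases le_or_gt t R with htR | htR
    · -- main case
      set a : ℝ := (σ + p)/p with ha
      set μ : Measure ℝ := volume.restrict (Ioc t R) with hμ
      haveI : IsFiniteMeasure μ := by
        constructor
        rw [hμ, Measure.restrict_apply_univ, Real.volume_Ioc]
        exact ENNReal.ofReal_lt_top
      obtain ⟨Cf, hCf⟩ := (isCompact_Icc (a := t) (b := R)).exists_bound_of_continuousOn
        hfc.continuousOn
      set φ : ℝ → ℝ := fun s => s ^ a * f s with hφ
      set ψ : ℝ → ℝ := fun s => s ^ (-a) with hψ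
      have hφm : AEStronglyMeasurable φ μ := by
        refine ContinuousOn.aestronglyMeasurable ?_ measurableSet_Ioc
        exact ((Real.continuous_rpow_const (by positivity : (0:ℝ) ≤ a)).continuousOn).mul
          hfc.continuousOn
      have hψm : AEStronglyMeasurable ψ μ := by
        refine ContinuousOn.aestronglyMeasurable ?_ measurableSet_Ioc
        intro s hs
        exact (Real.continuousAt_rpow_const s _ (Or.inl (ne_of_gt (lt_trans ht hs.1)))).continuousWithinAt
      have hφb : ∀ᵐ s ∂μ, ‖φ s‖ ≤ max (t ^ a) (R ^ a) * Cf := by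
        filter_upwards [ae_restrict_mem measurableSet_Ioc] with s hs
        have hs0 : (0:ℝ) < s := lt_trans ht hs.1
        rw [hφ, norm_mul, Real.norm_eq_abs, Real.norm_eq_abs,
          abs_of_nonneg (Real.rpow_nonneg hs0.le _)]
        exact mul_le_mul (rpow_le_max ht hs.1.le hs.2)
          (by simpa using hCf s ⟨hs.1.le, hs.2⟩) (abs_nonneg _)
          (le_max_iff.2 (Or.inl (Real.rpow_nonneg ht.le _)))
      have hψb : ∀ᵐ s ∂μ, ‖ψ s‖ ≤ max (t ^ (-a)) (R ^ (-a)) := by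
        filter_upwards [ae_restrict_mem measurableSet_Ioc] with s hs
        have hs0 : (0:ℝ) < s := lt_trans ht hs.1
        rw [hψ, Real.norm_eq_abs, abs_of_nonneg (Real.rpow_nonneg hs0.le _)]
        exact rpow_le_max ht hs.1.le hs.2
      have hφ0 : 0 ≤ᵐ[μ] φ := by
        filter_upwards [ae_restrict_mem measurableSet_Ioc] with s hs
        exact mul_nonneg (Real.rpow_nonneg (lt_trans ht hs.1).le _) (hf0 s)
      have hψ0 : 0 ≤ᵐ[μ] ψ := by
        filter_upwards [ae_restrict_mem measurableSet_Ioc] with s hs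
        exact Real.rpow_nonneg (lt_trans ht hs.1).le _
      have hHolder := integral_mul_le_Lp_mul_Lq_of_nonneg hpq hφ0 hψ0
        (MemLp.of_bound hφm _ hφb) (MemLp.of_bound hψm _ hψb)
      have hsub : Ioc t R ⊆ Ioi (0:ℝ) := fun s hs => lt_trans ht hs.1
      have hp0' : p ≠ 0 := ne_of_gt hp0
      have hp1'' : p - 1 ≠ 0 := ne_of_gt hp1'
      have hstep1 : (∫ s in t..R, f s) = ∫ s, φ s * ψ s ∂μ := by
        rw [intervalIntegral.integral_of_le htR, hμ]
        refine setIntegral_congr_fun measurableSet_Ioc (fun s hs => ?_)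
        have hs0 : (0:ℝ) < s := lt_trans ht hs.1
        have h1 : s ^ a * s ^ (-a) = 1 := by
          rw [← Real.rpow_add hs0, add_neg_cancel, Real.rpow_zero]
        show f s = s ^ a * f s * s ^ (-a)
        rw [mul_comm (s ^ a) (f s), mul_assoc, h1, mul_one]
      have hstep2 : (∫ s, φ s ^ p ∂μ) = ∫ s in Ioc t R, s ^ (σ+p) * f s ^ p := by
        refine setIntegral_congr_fun measurableSet_Ioc (fun s hs => ?_)
        have hs0 : (0:ℝ) < s := lt_trans ht hs.1
        show (s ^ a * f s) ^ p = _
        rw [Real.mul_rpow (Real.rpow_nonneg hs0.le _) (hf0 s), ← Real.rpow_mul hs0.le,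
          div_mul_cancel₀ _ hp0']
      have hstep3 : (∫ s, φ s ^ p ∂μ) ^ (1/p) ≤ A := by
        rw [hstep2, hA]
        refine Real.rpow_le_rpow (setIntegral_nonneg measurableSet_Ioc fun s hs =>
          mul_nonneg (Real.rpow_nonneg (lt_trans ht hs.1).le _)
            (Real.rpow_nonneg (hf0 s) _)) ?_ (by positivity)
        refine setIntegral_mono_set hAint ?_ hsub.eventuallyLE
        filter_upwards [ae_restrict_mem measurableSet_Ioi] with s hs
        exact mul_nonneg (Real.rpow_nonneg (le_of_lt hs) _) (Real.rpow_nonneg (hf0 s) _)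
      have hea : (-a) * q = -e := by
        rw [ha, he, hq, Real.conjExponent]
        field_simp
      have hstep4a : (∫ s, ψ s ^ q ∂μ) = ∫ s in Ioc t R, s ^ (-e) := by
        refine setIntegral_congr_fun measurableSet_Ioc (fun s hs => ?_)
        have hs0 : (0:ℝ) < s := lt_trans ht hs.1
        show (s ^ (-a)) ^ q = _
        rw [← Real.rpow_mul hs0.le, hea]
      have h0ψ : 0 ≤ (∫ s, ψ s ^ q ∂μ) := by
        rw [hstep4a]
        exact setIntegral_nonneg measurableSet_Ioc
          (fun s hs => Real.rpow_nonneg (lt_trans ht hs.1).le _)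
      have hstep4b : (∫ s in Ioc t R, s ^ (-e)) ≤ ∫ s in Ioi t, s ^ (-e) := by
        refine setIntegral_mono_set (integrableOn_Ioi_rpow_of_lt (by linarith) ht) ?_
          Ioc_subset_Ioi_self.eventuallyLE
        filter_upwards [ae_restrict_mem measurableSet_Ioi] with s hs
        exact Real.rpow_nonneg (lt_trans ht hs).le _
      have hstep4c : (∫ s in Ioi t, s ^ (-e)) = t ^ (1-e) / (e-1) := by
        rw [integral_Ioi_rpow_of_lt (by linarith) ht,
          show (-e) + 1 = 1 - e by ring,
          div_eq_div_iff (by intro h; exact absurd (by linarith : e = 1) (by linarith))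
            (by intro h; exact absurd (by linarith : e = 1) (by linarith))]
        ring
      have hstep4 : (∫ s, ψ s ^ q ∂μ) ^ (1/q) ≤ (e-1) ^ (-(1/q)) * t ^ (-((σ+1)/p)) := by
        have hle : (∫ s, ψ s ^ q ∂μ) ≤ t ^ (1-e)/(e-1) := by
          rw [hstep4a, ← hstep4c]; exact hstep4b
        calc (∫ s, ψ s ^ q ∂μ) ^ (1/q) ≤ (t ^ (1-e)/(e-1)) ^ (1/q) :=
              Real.rpow_le_rpow h0ψ hle (by positivity)
          _ = (e-1) ^ (-(1/q)) * t ^ (-((σ+1)/p)) := by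
              rw [Real.div_rpow (Real.rpow_nonneg ht.le _) (by linarith : (0:ℝ) ≤ e - 1),
                ← Real.rpow_mul ht.le, div_eq_mul_inv, ← Real.rpow_neg (by linarith),
                show (1-e)*(1/q) = -((σ+1)/p) from by
                  rw [he, hq, Real.conjExponent]; field_simp; ring]
              ring
      calc (∫ s in t..R, f s) = ∫ s, φ s * ψ s ∂μ := hstep1
        _ ≤ _ := hHolder
        _ ≤ A * ((e-1) ^ (-(1/q)) * t ^ (-((σ+1)/p))) := by
            refine mul_le_mul hstep3 hstep4 (Real.rpow_nonneg h0ψ _) hA0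
        _ = (e-1) ^ (-(1/q)) * t ^ (-((σ+1)/p)) * A := by ring
    · have hFt : (∫ s in t..R, f s) = 0 := by
        rw [intervalIntegral.integral_congr (g := fun _ => (0:ℝ)) ?_]
        · simp
        · intro s hs
          rw [uIcc_of_ge htR.le] at hs
          exact hfR s hs.1
      rw [hFt]
      exact mul_nonneg (mul_nonneg hKpos.le (Real.rpow_nonneg ht.le _)) hA0


/-- Weighted Hardy inequality on `(0,∞)`. -/
lemma hardy {p σ : ℝ} (hp : 1 ≤ p) (hσ : -1 < σ)
    (R : ℝ) (hR : 0 < R) (f : ℝ → ℝ) (hfc : Continuous f) (hf0 : ∀ s, 0 ≤ f s)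
    (hfR : ∀ s, R ≤ s → f s = 0) :
    (∫ t in Ioi (0:ℝ), t ^ σ * (∫ s in t..R, f s) ^ p)
      ≤ ((p/(σ+1)) * (∫ s in Ioi (0:ℝ), s ^ (σ+p) * f s ^ p) ^ (1/p)) ^ p := by
  have hp0 : (0:ℝ) < p := lt_of_lt_of_le one_pos hp
  have hσ1 : (0:ℝ) < σ + 1 := by linarith
  set F : ℝ → ℝ := fun t => ∫ s in t..R, f s with hF
  have hFd : ∀ t : ℝ, HasDerivAt F (-(f t)) t := by
    intro t
    have h1 : HasDerivAt (fun u => ∫ s in R..u, f s) (f t) t :=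
      intervalIntegral.integral_hasDerivAt_right (hfc.intervalIntegrable R t)
        (hfc.stronglyMeasurableAtFilter _ _) hfc.continuousAt
    have h2 : F = fun u => -∫ s in R..u, f s := by
      funext u
      simp only [hF]
      exact intervalIntegral.integral_symm R u
    rw [h2]
    exact h1.neg
  have hFc : Continuous F := continuous_iff_continuousAt.2 fun t => (hFd t).continuousAt
  have hFR : ∀ t, R ≤ t → F t = 0 := by
    intro t hRt
    have h0 : (∫ s in t..R, f s) = 0 := by
      rw [intervalIntegral.integral_congr (g := fun _ => (0:ℝ)) ?_]
      · simp
      · intro s hs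
        rw [uIcc_of_ge hRt] at hs
        exact hfR s hs.1
    exact h0
  have hF0 : ∀ t, 0 ≤ F t := by
    intro t
    rcases le_or_gt t R with h | h
    · exact intervalIntegral.integral_nonneg h (fun s _ => hf0 s)
    · rw [hFR t h.le]
  have hFle : ∀ t, 0 ≤ t → F t ≤ F 0 := by
    intro t ht
    have hsplit : (∫ s in (0:ℝ)..t, f s) + ∫ s in t..R, f s = ∫ s in (0:ℝ)..R, f s :=
      intervalIntegral.integral_add_adjacent_intervals (hfc.intervalIntegrable _ _)
        (hfc.intervalIntegrable _ _)
    have h1 : 0 ≤ ∫ s in (0:ℝ)..t, f s :=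
      intervalIntegral.integral_nonneg ht (fun s _ => hf0 s)
    simp only [hF]
    linarith
  have hAint : IntegrableOn (fun s => s ^ (σ+p) * f s ^ p) (Ioi (0:ℝ)) := by
    refine integrableOn_rpow_mul (by linarith) hR
      (hfc.rpow_const (fun x => Or.inr hp0.le)) ?_
    intro s hs
    rw [hfR s hs, Real.zero_rpow (ne_of_gt hp0)]
  have hAintnn : 0 ≤ ∫ s in Ioi (0:ℝ), s ^ (σ+p) * f s ^ p :=
    setIntegral_nonneg measurableSet_Ioi (fun s hs =>
      mul_nonneg (Real.rpow_nonneg (le_of_lt hs) _) (Real.rpow_nonneg (hf0 s) _))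
  set A : ℝ := (∫ s in Ioi (0:ℝ), s ^ (σ+p) * f s ^ p) ^ (1/p) with hA
  have hA0 : 0 ≤ A := Real.rpow_nonneg hAintnn _
  have hyI : IntegrableOn (fun t => t ^ σ * F t ^ p) (Ioi (0:ℝ)) := by
    refine integrableOn_rpow_mul hσ hR ((Real.continuous_rpow_const hp0.le).comp hFc) ?_
    intro s hs
    show F s ^ p = 0
    rw [hFR s hs, Real.zero_rpow (ne_of_gt hp0)]
  set y : ℝ := ∫ t in Ioi (0:ℝ), t ^ σ * F t ^ p with hy
  have hy0 : 0 ≤ y :=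
    setIntegral_nonneg measurableSet_Ioi (fun t ht =>
      mul_nonneg (Real.rpow_nonneg (le_of_lt ht) _) (Real.rpow_nonneg (hF0 t) _))
  -- key inequality on compact subintervals
  have key : ∀ ε : ℝ, 0 < ε → ε ≤ R →
      (σ+1) * (∫ t in Ioc ε R, t ^ σ * F t ^ p) ≤
        p * ((∫ t in Ioc ε R, t ^ σ * F t ^ p) ^ (1 - 1/p) * A) := by
    intro ε hε hεR
    set g1 : ℝ → ℝ := fun t => t ^ σ * F t ^ p with hg1
    set g2 : ℝ → ℝ := fun t => t ^ (σ+1) * F t ^ (p-1) * f t with hg2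
    have hg1i : IntervalIntegrable g1 volume ε R := by
      refine ContinuousOn.intervalIntegrable ?_
      rw [uIcc_of_le hεR]
      refine ContinuousOn.mul ?_ ((Real.continuous_rpow_const hp0.le).comp hFc).continuousOn
      intro s hs
      exact (Real.continuousAt_rpow_const s _
        (Or.inl (ne_of_gt (lt_of_lt_of_le hε hs.1)))).continuousWithinAt
    have hg2c : Continuous g2 :=
      ((Real.continuous_rpow_const hσ1.le).mul
        ((Real.continuous_rpow_const (by linarith)).comp hFc)).mul hfc
    have hg2i : IntervalIntegrable g2 volume ε R := hg2c.intervalIntegrable _ _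
    have hderiv : ∀ t ∈ uIcc ε R, HasDerivAt (fun u => u ^ (σ+1) * F u ^ p)
        ((σ+1) * g1 t - p * g2 t) t := by
      intro t ht
      rw [uIcc_of_le hεR] at ht
      have ht0 : (0:ℝ) < t := lt_of_lt_of_le hε ht.1
      have h1 : HasDerivAt (fun u : ℝ => u ^ (σ+1)) ((σ+1) * t ^ σ) t := by
        have := Real.hasDerivAt_rpow_const (x := t) (p := σ+1) (Or.inl (ne_of_gt ht0))
        simpa using this
      have h2 : HasDerivAt (fun u => F u ^ p) (p * F t ^ (p-1) * -(f t)) t := by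
        have hz := Real.hasDerivAt_rpow_const (x := F t) (p := p) (Or.inr hp)
        have := hz.comp t (hFd t)
        simpa [Function.comp_def] using this
      have := h1.mul h2
      refine this.congr_deriv ?_
      simp only [hg1, hg2]
      ring
    have hFTC := intervalIntegral.integral_eq_sub_of_hasDerivAt hderiv
      ((hg1i.const_mul (σ+1)).sub (hg2i.const_mul p))
    have hHR : R ^ (σ+1) * F R ^ p = 0 := by
      rw [hFR R le_rfl, Real.zero_rpow (ne_of_gt hp0), mul_zero]
    have hHε : 0 ≤ ε ^ (σ+1) * F ε ^ p :=
      mul_nonneg (Real.rpow_nonneg hε.le _) (Real.rpow_nonneg (hF0 ε) _)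
    have hsplitInt : (∫ t in ε..R, ((σ+1) * g1 t - p * g2 t))
        = (σ+1) * (∫ t in ε..R, g1 t) - p * (∫ t in ε..R, g2 t) := by
      rw [intervalIntegral.integral_sub (hg1i.const_mul _) (hg2i.const_mul _),
        intervalIntegral.integral_const_mul, intervalIntegral.integral_const_mul]
    have hineq1 : (σ+1) * (∫ t in Ioc ε R, g1 t) ≤ p * (∫ t in Ioc ε R, g2 t) := by
      rw [hsplitInt] at hFTC
      rw [hHR] at hFTC
      rw [← intervalIntegral.integral_of_le hεR, ← intervalIntegral.integral_of_le hεR]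
      linarith
    have hsub : Ioc ε R ⊆ Ioi (0:ℝ) := fun s hs => lt_trans hε hs.1
    have hineq2 : (∫ t in Ioc ε R, g2 t) ≤ (∫ t in Ioc ε R, g1 t) ^ (1 - 1/p) * A := by
      rcases eq_or_lt_of_le hp with hp1 | hp1
      · -- p = 1
        have hg2eq : EqOn g2 (fun t => t ^ (σ+1) * f t) (Ioc ε R) := by
          intro t ht
          simp only [hg2, ← hp1, sub_self, Real.rpow_zero, mul_one]
        have hA1 : A = ∫ s in Ioi (0:ℝ), s ^ (σ+1) * f s := by
          rw [hA, ← hp1]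
          simp [Real.rpow_one]
        calc (∫ t in Ioc ε R, g2 t) = ∫ t in Ioc ε R, t ^ (σ+1) * f t :=
              setIntegral_congr_fun measurableSet_Ioc hg2eq
          _ ≤ ∫ s in Ioi (0:ℝ), s ^ (σ+1) * f s := by
              refine setIntegral_mono_set ?_ ?_ hsub.eventuallyLE
              · have := hAint
                rw [← hp1] at this
                simpa [Real.rpow_one] using this
              · filter_upwards [ae_restrict_mem measurableSet_Ioi] with s hs
                exact mul_nonneg (Real.rpow_nonneg (le_of_lt hs) _) (hf0 s)
          _ = (∫ t in Ioc ε R, g1 t) ^ (1 - 1/p) * A := by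
              rw [← hp1]
              norm_num [hA1]
      · -- 1 < p : Hölder
        set q : ℝ := Real.conjExponent p with hq
        have hpq : p.HolderConjugate q := Real.HolderConjugate.conjExponent hp1
        have hq0 : 0 < q := hpq.symm.pos
        have hp1' : (0:ℝ) < p - 1 := by linarith
        set μ : Measure ℝ := volume.restrict (Ioc ε R) with hμ
        haveI : IsFiniteMeasure μ := by
          constructor
          rw [hμ, Measure.restrict_apply_univ, Real.volume_Ioc]
          exact ENNReal.ofReal_lt_top
        obtain ⟨Cf, hCf⟩ := (isCompact_Icc (a := ε) (b := R)).exists_bound_of_continuousOn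
          hfc.continuousOn
        set b1 : ℝ → ℝ := fun t => t ^ (σ/q) * F t ^ (p-1) with hb1
        set b2 : ℝ → ℝ := fun t => t ^ ((σ+p)/p) * f t with hb2
        have hb1m : AEStronglyMeasurable b1 μ := by
          refine ContinuousOn.aestronglyMeasurable ?_ measurableSet_Ioc
          refine ContinuousOn.mul ?_
            ((Real.continuous_rpow_const hp1'.le).comp hFc).continuousOn
          intro s hs
          exact (Real.continuousAt_rpow_const s _
            (Or.inl (ne_of_gt (lt_trans hε hs.1)))).continuousWithinAt
        have hb2m : AEStronglyMeasurable b2 μ := by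
          refine ContinuousOn.aestronglyMeasurable ?_ measurableSet_Ioc
          refine ContinuousOn.mul ?_ hfc.continuousOn
          intro s hs
          exact (Real.continuousAt_rpow_const s _
            (Or.inl (ne_of_gt (lt_trans hε hs.1)))).continuousWithinAt
        have hb1b : ∀ᵐ t ∂μ, ‖b1 t‖ ≤ max (ε ^ (σ/q)) (R ^ (σ/q)) * F 0 ^ (p-1) := by
          filter_upwards [ae_restrict_mem measurableSet_Ioc] with t ht
          have ht0 : (0:ℝ) < t := lt_trans hε ht.1
          rw [hb1, norm_mul, Real.norm_eq_abs, Real.norm_eq_abs,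
            abs_of_nonneg (Real.rpow_nonneg ht0.le _),
            abs_of_nonneg (Real.rpow_nonneg (hF0 t) _)]
          refine mul_le_mul (rpow_le_max hε ht.1.le ht.2)
            (Real.rpow_le_rpow (hF0 t) (hFle t ht0.le) hp1'.le)
            (Real.rpow_nonneg (hF0 t) _)
            (le_max_iff.2 (Or.inl (Real.rpow_nonneg hε.le _)))
        have hb2b : ∀ᵐ t ∂μ, ‖b2 t‖ ≤ max (ε ^ ((σ+p)/p)) (R ^ ((σ+p)/p)) * Cf := by
          filter_upwards [ae_restrict_mem measurableSet_Ioc] with t ht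
          have ht0 : (0:ℝ) < t := lt_trans hε ht.1
          rw [hb2, norm_mul, Real.norm_eq_abs,
            abs_of_nonneg (Real.rpow_nonneg ht0.le _)]
          refine mul_le_mul (rpow_le_max hε ht.1.le ht.2)
            (by simpa using hCf t ⟨ht.1.le, ht.2⟩) (norm_nonneg _)
            (le_max_iff.2 (Or.inl (Real.rpow_nonneg hε.le _)))
        have hb10 : 0 ≤ᵐ[μ] b1 := by
          filter_upwards [ae_restrict_mem measurableSet_Ioc] with t ht
          exact mul_nonneg (Real.rpow_nonneg (lt_trans hε ht.1).le _)
            (Real.rpow_nonneg (hF0 t) _)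
        have hb20 : 0 ≤ᵐ[μ] b2 := by
          filter_upwards [ae_restrict_mem measurableSet_Ioc] with t ht
          exact mul_nonneg (Real.rpow_nonneg (lt_trans hε ht.1).le _) (hf0 t)
        have hHolder := integral_mul_le_Lp_mul_Lq_of_nonneg hpq.symm hb10 hb20
          (MemLp.of_bound hb1m _ hb1b) (MemLp.of_bound hb2m _ hb2b)
        have heq1 : (∫ t in Ioc ε R, g2 t) = ∫ t, b1 t * b2 t ∂μ := by
          refine setIntegral_congr_fun measurableSet_Ioc (fun t ht => ?_)
          have ht0 : (0:ℝ) < t := lt_trans hε ht.1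
          simp only [hg2, hb1, hb2]
          rw [show t ^ (σ/q) * F t ^ (p-1) * (t ^ ((σ+p)/p) * f t)
              = t ^ (σ/q) * t ^ ((σ+p)/p) * F t ^ (p-1) * f t from by ring,
            ← Real.rpow_add ht0,
            show σ/q + (σ+p)/p = σ + 1 from by
              rw [hq, Real.conjExponent]; field_simp; ring]
        have heq2 : (∫ t, b1 t ^ q ∂μ) = ∫ t in Ioc ε R, g1 t := by
          refine setIntegral_congr_fun measurableSet_Ioc (fun t ht => ?_)
          have ht0 : (0:ℝ) < t := lt_trans hε ht.1
          simp only [hb1, hg1]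
          rw [Real.mul_rpow (Real.rpow_nonneg ht0.le _) (Real.rpow_nonneg (hF0 t) _),
            ← Real.rpow_mul ht0.le, ← Real.rpow_mul (hF0 t),
            div_mul_cancel₀ _ (ne_of_gt hq0), hpq.sub_one_mul_conj]
        have hg10 : 0 ≤ ∫ t in Ioc ε R, g1 t :=
          setIntegral_nonneg measurableSet_Ioc (fun t ht =>
            mul_nonneg (Real.rpow_nonneg (lt_trans hε ht.1).le _)
              (Real.rpow_nonneg (hF0 t) _))
        have heq3 : (∫ t, b2 t ^ p ∂μ) ^ (1/p) ≤ A := by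
          have heq3a : (∫ t, b2 t ^ p ∂μ) = ∫ t in Ioc ε R, t ^ (σ+p) * f t ^ p := by
            refine setIntegral_congr_fun measurableSet_Ioc (fun t ht => ?_)
            have ht0 : (0:ℝ) < t := lt_trans hε ht.1
            simp only [hb2]
            rw [Real.mul_rpow (Real.rpow_nonneg ht0.le _) (hf0 t),
              ← Real.rpow_mul ht0.le, div_mul_cancel₀ _ (ne_of_gt hp0)]
          rw [heq3a, hA]
          refine Real.rpow_le_rpow (setIntegral_nonneg measurableSet_Ioc fun t ht =>
            mul_nonneg (Real.rpow_nonneg (lt_trans hε ht.1).le _)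
              (Real.rpow_nonneg (hf0 t) _)) ?_ (by positivity)
          refine setIntegral_mono_set hAint ?_ hsub.eventuallyLE
          filter_upwards [ae_restrict_mem measurableSet_Ioi] with s hs
          exact mul_nonneg (Real.rpow_nonneg (le_of_lt hs) _) (Real.rpow_nonneg (hf0 s) _)
        have h1q : 1/q = 1 - 1/p := by
          have := hpq.inv_add_inv_eq_one
          rw [one_div, one_div]
          linarith
        calc (∫ t in Ioc ε R, g2 t) = ∫ t, b1 t * b2 t ∂μ := heq1
          _ ≤ (∫ t, b1 t ^ q ∂μ) ^ (1/q) * (∫ t, b2 t ^ p ∂μ) ^ (1/p) := hHolder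
          _ ≤ (∫ t, b1 t ^ q ∂μ) ^ (1/q) * A := by
              refine mul_le_mul_of_nonneg_left heq3 ?_
              rw [heq2]
              exact Real.rpow_nonneg hg10 _
          _ = (∫ t in Ioc ε R, g1 t) ^ (1 - 1/p) * A := by rw [heq2, h1q]
    calc (σ+1) * (∫ t in Ioc ε R, g1 t) ≤ p * (∫ t in Ioc ε R, g2 t) := hineq1
      _ ≤ p * ((∫ t in Ioc ε R, g1 t) ^ (1 - 1/p) * A) :=
          mul_le_mul_of_nonneg_left hineq2 hp0.le
  -- pass to the limit
  have hIocIoi : (∫ t in Ioi (0:ℝ), t ^ σ * F t ^ p) = ∫ t in Ioc (0:ℝ) R, t ^ σ * F t ^ p := by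
    rw [← Ioc_union_Ioi_eq_Ioi hR.le, setIntegral_union (Ioc_disjoint_Ioi le_rfl)
      measurableSet_Ioi
      (hyI.mono_set Ioc_subset_Ioi_self)
      (hyI.mono_set (Ioi_subset_Ioi hR.le))]
    have h0 : (∫ t in Ioi R, t ^ σ * F t ^ p) = 0 := by
      rw [setIntegral_congr_fun measurableSet_Ioi (g := fun _ => (0:ℝ))
        (fun t ht => by rw [hFR t (le_of_lt ht), Real.zero_rpow (ne_of_gt hp0), mul_zero])]
      simp
    rw [h0, add_zero]
  set sk : ℕ → Set ℝ := fun k => Ioc (R/(k+1)) R with hsk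
  have hmono : Monotone sk := by
    intro k l hkl
    refine Ioc_subset_Ioc ?_ le_rfl
    have hcast : (k:ℝ) + 1 ≤ (l:ℝ) + 1 := by exact_mod_cast Nat.succ_le_succ hkl
    exact div_le_div_of_nonneg_left hR.le (by positivity) hcast
  have hUnion : (⋃ k, sk k) = Ioc (0:ℝ) R := by
    ext t
    simp only [hsk, mem_iUnion, mem_Ioc]
    constructor
    · rintro ⟨k, hk1, hk2⟩
      exact ⟨lt_trans (by positivity) hk1, hk2⟩
    · rintro ⟨ht0, htR⟩
      obtain ⟨k, hk⟩ := exists_nat_gt (R/t)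
      refine ⟨k, ?_, htR⟩
      rw [div_lt_iff₀ (by positivity)]
      rw [div_lt_iff₀ ht0] at hk
      nlinarith
  have htendsto : Filter.Tendsto (fun k => ∫ t in sk k, t ^ σ * F t ^ p) Filter.atTop
      (𝓝 (∫ t in ⋃ k, sk k, t ^ σ * F t ^ p)) :=
    tendsto_setIntegral_of_monotone (fun k => measurableSet_Ioc) hmono
      (by rw [hUnion]; exact hyI.mono_set Ioc_subset_Ioi_self)
  rw [hUnion, ← hIocIoi, ← hy] at htendsto
  have hεk : ∀ k : ℕ, (σ+1) * (∫ t in sk k, t ^ σ * F t ^ p) ≤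
      p * ((∫ t in sk k, t ^ σ * F t ^ p) ^ (1 - 1/p) * A) := by
    intro k
    refine key (R/(k+1)) (by positivity) ?_
    rw [div_le_iff₀ (by positivity)]
    nlinarith [hR]
  have h1p : (0:ℝ) ≤ 1 - 1/p := by
    rw [sub_nonneg]
    exact div_le_one_of_le₀ hp hp0.le
  have hlim1 : Filter.Tendsto (fun k => (σ+1) * ∫ t in sk k, t ^ σ * F t ^ p)
      Filter.atTop (𝓝 ((σ+1)*y)) := htendsto.const_mul _
  have hrpowc : Filter.Tendsto (fun k => (∫ t in sk k, t ^ σ * F t ^ p) ^ (1 - 1/p))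
      Filter.atTop (𝓝 (y ^ (1-1/p))) :=
    (Real.continuousAt_rpow_const y _ (Or.inr h1p)).tendsto.comp htendsto
  have hlim2 : Filter.Tendsto (fun k => p * ((∫ t in sk k, t ^ σ * F t ^ p) ^ (1 - 1/p) * A))
      Filter.atTop (𝓝 (p * (y ^ (1-1/p) * A))) := (hrpowc.mul_const A).const_mul p
  have hmain : (σ+1) * y ≤ p * (y ^ (1-1/p) * A) :=
    le_of_tendsto_of_tendsto' hlim1 hlim2 hεk
  -- conclude
  rcases eq_or_lt_of_le hy0 with hy0' | hy0'
  · rw [← hy0']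
    exact Real.rpow_nonneg (mul_nonneg (by positivity) hA0) p
  · have h2 : (0:ℝ) < y ^ (1-1/p) := Real.rpow_pos_of_pos hy0' _
    have h1 : y = y ^ (1/p) * y ^ (1-1/p) := by
      rw [← Real.rpow_add hy0', show 1/p + (1-1/p) = 1 from by ring, Real.rpow_one]
    have h3 : (σ+1) * y ^ (1/p) * y ^ (1-1/p) ≤ p * A * y ^ (1-1/p) := by
      calc (σ+1) * y ^ (1/p) * y ^ (1-1/p) = (σ+1) * y := by rw [mul_assoc, ← h1]
        _ ≤ p * (y ^ (1-1/p) * A) := hmain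
        _ = p * A * y ^ (1-1/p) := by ring
    have h4 : (σ+1) * y ^ (1/p) ≤ p * A := le_of_mul_le_mul_right h3 h2
    have h5 : y ^ (1/p) ≤ p/(σ+1) * A := by
      rw [div_mul_eq_mul_div, le_div_iff₀ hσ1]
      linarith
    calc y = (y ^ (1/p)) ^ p := by
          rw [← Real.rpow_mul hy0, one_div, inv_mul_cancel₀ (ne_of_gt hp0), Real.rpow_one]
      _ ≤ (p/(σ+1) * A) ^ p := Real.rpow_le_rpow (Real.rpow_nonneg hy0 _) h5 hp0.le


/-- Combined 1D inequality. -/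
lemma oneD {p r σ : ℝ} (hp : 1 ≤ p) (hpr : p ≤ r) (hσ : -1 < σ) :
    ∃ C : ℝ, 0 < C ∧ ∀ R : ℝ, 0 < R → ∀ f v : ℝ → ℝ, Continuous f → (∀ s, 0 ≤ f s) →
      (∀ s, R ≤ s → f s = 0) → (∀ t, 0 < t → |v t| ≤ ∫ s in t..R, f s) →
      (∫ t in Ioi (0:ℝ), t ^ (σ + (σ+1)*(r-p)/p) * |v t| ^ r)
        ≤ C * (∫ s in Ioi (0:ℝ), s ^ (σ + p) * f s ^ p) ^ (r/p) := by
  have hp0 : (0:ℝ) < p := lt_of_lt_of_le one_pos hp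
  have hr0 : (0:ℝ) < r := lt_of_lt_of_le hp0 hpr
  have hσ1 : (0:ℝ) < σ + 1 := by linarith
  obtain ⟨K, hK, hKspec⟩ := pointwise_bound hp hσ
  refine ⟨K ^ (r-p) * (p/(σ+1)) ^ p, by positivity, ?_⟩
  intro R hR f v hfc hf0 hfR hv
  set F : ℝ → ℝ := fun t => ∫ s in t..R, f s with hF
  have hFd : ∀ t : ℝ, HasDerivAt F (-(f t)) t := by
    intro t
    have h1 : HasDerivAt (fun u => ∫ s in R..u, f s) (f t) t :=
      intervalIntegral.integral_hasDerivAt_right (hfc.intervalIntegrable R t)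
        (hfc.stronglyMeasurableAtFilter _ _) hfc.continuousAt
    have h2 : F = fun u => -∫ s in R..u, f s := by
      funext u
      simp only [hF]
      exact intervalIntegral.integral_symm R u
    rw [h2]
    exact h1.neg
  have hFc : Continuous F := continuous_iff_continuousAt.2 fun t => (hFd t).continuousAt
  have hFR : ∀ t, R ≤ t → F t = 0 := by
    intro t hRt
    have h0 : (∫ s in t..R, f s) = 0 := by
      rw [intervalIntegral.integral_congr (g := fun _ => (0:ℝ)) ?_]
      · simp
      · intro s hs
        rw [uIcc_of_ge hRt] at hs
        exact hfR s hs.1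
    exact h0
  have hF0 : ∀ t, 0 ≤ F t := by
    intro t
    rcases le_or_gt t R with h | h
    · exact intervalIntegral.integral_nonneg h (fun s _ => hf0 s)
    · rw [hFR t h.le]
  set I : ℝ := ∫ s in Ioi (0:ℝ), s ^ (σ+p) * f s ^ p with hI
  have hInn : 0 ≤ I :=
    setIntegral_nonneg measurableSet_Ioi (fun s hs =>
      mul_nonneg (Real.rpow_nonneg (le_of_lt hs) _) (Real.rpow_nonneg (hf0 s) _))
  set A : ℝ := I ^ (1/p) with hA
  have hA0 : 0 ≤ A := Real.rpow_nonneg hInn _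
  have hyI : IntegrableOn (fun t => t ^ σ * F t ^ p) (Ioi (0:ℝ)) := by
    refine integrableOn_rpow_mul hσ hR ((Real.continuous_rpow_const hp0.le).comp hFc) ?_
    intro s hs
    show F s ^ p = 0
    rw [hFR s hs, Real.zero_rpow (ne_of_gt hp0)]
  have hptwise : ∀ t, t ∈ Ioi (0:ℝ) →
      t ^ (σ + (σ+1)*(r-p)/p) * |v t| ^ r
        ≤ (K^(r-p) * A^(r-p)) * (t ^ σ * F t ^ p) := by
    intro t ht
    have ht0 : (0:ℝ) < t := ht
    have hb0 : (0:ℝ) ≤ t ^ (σ + (σ+1)*(r-p)/p) := Real.rpow_nonneg ht0.le _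
    have h1 : |v t| ^ r ≤ F t ^ (r-p) * F t ^ p := by
      rw [← Real.rpow_add' (hF0 t) (by rw [sub_add_cancel]; exact ne_of_gt hr0),
        sub_add_cancel]
      exact Real.rpow_le_rpow (abs_nonneg _) (hv t ht0) hr0.le
    have h3 : F t ^ (r-p) ≤ K ^ (r-p) * t ^ (-((σ+1)/p)*(r-p)) * A ^ (r-p) := by
      have hKA := hKspec R hR f hfc hf0 hfR t ht0
      calc F t ^ (r-p) ≤ (K * t ^ (-((σ+1)/p)) * A) ^ (r-p) :=
            Real.rpow_le_rpow (hF0 t) hKA (by linarith)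
        _ = K ^ (r-p) * t ^ (-((σ+1)/p)*(r-p)) * A ^ (r-p) := by
            rw [Real.mul_rpow (mul_nonneg hK.le (Real.rpow_nonneg ht0.le _)) hA0,
              Real.mul_rpow hK.le (Real.rpow_nonneg ht0.le _),
              ← Real.rpow_mul ht0.le]
    calc t ^ (σ + (σ+1)*(r-p)/p) * |v t| ^ r
        ≤ t ^ (σ + (σ+1)*(r-p)/p) * (F t ^ (r-p) * F t ^ p) :=
          mul_le_mul_of_nonneg_left h1 hb0
      _ ≤ t ^ (σ + (σ+1)*(r-p)/p) *
            ((K ^ (r-p) * t ^ (-((σ+1)/p)*(r-p)) * A ^ (r-p)) * F t ^ p) :=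
          mul_le_mul_of_nonneg_left
            (mul_le_mul_of_nonneg_right h3 (Real.rpow_nonneg (hF0 t) p)) hb0
      _ = (K^(r-p) * A^(r-p)) *
            ((t ^ (σ + (σ+1)*(r-p)/p) * t ^ (-((σ+1)/p)*(r-p))) * F t ^ p) := by ring
      _ = (K^(r-p) * A^(r-p)) * (t ^ σ * F t ^ p) := by
          rw [← Real.rpow_add ht0,
            show σ + (σ+1)*(r-p)/p + (-((σ+1)/p)*(r-p)) = σ from by ring]
  calc (∫ t in Ioi (0:ℝ), t ^ (σ + (σ+1)*(r-p)/p) * |v t| ^ r)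
      ≤ ∫ t in Ioi (0:ℝ), (K^(r-p) * A^(r-p)) * (t ^ σ * F t ^ p) := by
        refine integral_mono_of_nonneg ?_ (hyI.const_mul _) ?_
        · filter_upwards [ae_restrict_mem measurableSet_Ioi] with t ht
          exact mul_nonneg (Real.rpow_nonneg (le_of_lt ht) _)
            (Real.rpow_nonneg (abs_nonneg _) _)
        · filter_upwards [ae_restrict_mem measurableSet_Ioi] with t ht
          exact hptwise t ht
    _ = (K^(r-p) * A^(r-p)) * ∫ t in Ioi (0:ℝ), t ^ σ * F t ^ p :=
        integral_const_mul _ _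
    _ ≤ (K^(r-p) * A^(r-p)) * ((p/(σ+1)) * A) ^ p := by
        refine mul_le_mul_of_nonneg_left ?_
          (mul_nonneg (Real.rpow_nonneg hK.le _) (Real.rpow_nonneg hA0 _))
        exact hardy hp hσ R hR f hfc hf0 hfR
    _ = K ^ (r-p) * (p/(σ+1)) ^ p * I ^ (r/p) := by
        rw [Real.mul_rpow (by positivity) hA0,
          show K^(r-p) * A^(r-p) * ((p/(σ+1))^p * A^p)
            = K^(r-p)*(p/(σ+1))^p * (A^(r-p)*A^p) from by ring,
          ← Real.rpow_add' hA0 (by rw [sub_add_cancel]; exact ne_of_gt hr0),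
          sub_add_cancel, hA, ← Real.rpow_mul hInn,
          show 1/p*r = r/p from by ring]

end CKN

/-- Improved Caffarelli–Kohn–Nirenberg inequality for radial functions, case
`a = 1` (first-order Hardy–Sobolev inequality with power weights, allowing
`α - γ ≤ 0`): `‖ |x|^γ u ‖_{L^r} ≤ C ‖ |x|^α ∇u ‖_{L^p}`. -/
theorem stmt10 (n : ℕ) (hn : 2 ≤ n) (p r α γ : ℝ)
    (hp : 1 ≤ p) (hpr : p ≤ r)
    (hscale : 1 / r + γ / n = 1 / p + (α - 1) / n)
    (hpos : 0 < 1 / r + γ / n)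
    (h1 : ((n : ℝ) - 1) * (1 / r - 1 / p) ≤ α - γ)
    (h2 : α - γ ≤ 0)
    (h3 : p = 1 → ((n : ℝ) - 1) * (1 / r - 1 / p) < α - γ) :
    ∃ C > 0, ∀ u : EuclideanSpace ℝ (Fin n) → ℝ,
      ContDiff ℝ (⊤ : ℕ∞) u → HasCompactSupport u →
      (∃ u0 : ℝ → ℝ, ∀ x, u x = u0 ‖x‖) →
      (∫ x, (‖x‖ ^ γ * |u x|) ^ r) ^ (1 / r)
        ≤ C * (∫ x, (‖x‖ ^ α * ‖fderiv ℝ u x‖) ^ p) ^ (1 / p) := by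
  have hn1 : 1 ≤ n := le_trans (by norm_num) hn
  have hn0 : (0:ℝ) < n := by exact_mod_cast (by omega : 0 < n)
  have hp0 : (0:ℝ) < p := lt_of_lt_of_le one_pos hp
  have hr0 : (0:ℝ) < r := lt_of_lt_of_le hp0 hpr
  have hnne : (n:ℝ) ≠ 0 := ne_of_gt hn0
  have hpne : p ≠ 0 := ne_of_gt hp0
  have hrne : r ≠ 0 := ne_of_gt hr0
  set σ : ℝ := (α - 1)*p + n - 1 with hσdef
  have hσ : -1 < σ := by
    have h2' : 0 < 1/p + (α-1)/(n:ℝ) := by rw [← hscale]; exact hpos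
    have h4 : ((n:ℝ)*p) * (1/p + (α-1)/n) = n + (α-1)*p := by field_simp
    have h3' : 0 < (n:ℝ) + (α-1)*p := by
      rw [← h4]; exact mul_pos (by positivity) h2'
    rw [hσdef]; linarith
  have hexp : (n:ℝ) - 1 + γ*r = σ + (σ+1)*(r-p)/p := by
    have h : (n:ℝ)*p + γ*r*p = n*r + (α-1)*r*p := by
      have h0 := hscale
      field_simp at h0
      refine mul_left_cancel₀ hnne ?_
      linear_combination (n:ℝ) * h0
    rw [hσdef]
    field_simp
    linear_combination h
  have hexp2 : σ + p = (n:ℝ) - 1 + α*p := by rw [hσdef]; ring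
  obtain ⟨C1, hC1, hC1spec⟩ := CKN.oneD hp hpr hσ
  haveI : Nonempty (Fin n) := ⟨⟨0, by omega⟩⟩
  set c : ℝ := (n:ℝ) * (volume (Metric.ball (0 : EuclideanSpace ℝ (Fin n)) 1)).toReal with hcdef
  have hcpos : 0 < c := by
    refine mul_pos hn0 (ENNReal.toReal_pos ?_ ?_)
    · exact (Metric.measure_ball_pos _ _ one_pos).ne'
    · exact measure_ball_lt_top.ne
  refine ⟨C1 ^ (1/r) * c ^ (1/r) / c ^ (1/p),
    div_pos (mul_pos (Real.rpow_pos_of_pos hC1 _) (Real.rpow_pos_of_pos hcpos _))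
      (Real.rpow_pos_of_pos hcpos _), ?_⟩
  intro u hu hsupp hrad
  obtain ⟨u0, hu0⟩ := hrad
  set e : EuclideanSpace ℝ (Fin n) := EuclideanSpace.single ⟨0, by omega⟩ (1:ℝ) with he
  have hnorme : ‖e‖ = 1 := by rw [he, EuclideanSpace.norm_single]; norm_num
  haveI : Nontrivial (EuclideanSpace ℝ (Fin n)) := by
    refine nontrivial_of_ne e 0 ?_
    intro h
    rw [h, norm_zero] at hnorme
    norm_num at hnorme
  set v : ℝ → ℝ := fun t => u (t • e) with hvdef
  have hnsm : ∀ t : ℝ, ‖t • e‖ = |t| := by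
    intro t; rw [norm_smul, hnorme, mul_one, Real.norm_eq_abs]
  have huv : ∀ x : EuclideanSpace ℝ (Fin n), u x = v ‖x‖ := by
    intro x
    show u x = u (‖x‖ • e)
    rw [hu0 x, hu0 (‖x‖ • e), hnsm, abs_norm]
  have hud : Differentiable ℝ u := hu.differentiable (by simp)
  set d : ℝ → ℝ := fun t => (fderiv ℝ u (t • e)) e with hddef
  have hcurve : ∀ (w c0 : EuclideanSpace ℝ (Fin n)) (t : ℝ),
      HasDerivAt (fun s : ℝ => c0 + s • w) w t := by
    intro w c0 t
    simpa using ((hasDerivAt_id t).smul_const w).const_add c0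
  have hvd : ∀ t, HasDerivAt v (d t) t := by
    intro t
    have h0 : HasDerivAt (fun s : ℝ => s • e) e t := by
      simpa using (hasDerivAt_id t).smul_const e
    exact (hud (t • e)).hasFDerivAt.comp_hasDerivAt t h0
  have hdc : Continuous d := by
    have h1 : Continuous (fderiv ℝ u) := hu.continuous_fderiv (by simp)
    exact (h1.comp (continuous_id.smul continuous_const)).clm_apply continuous_const
  obtain ⟨R0, hR0⟩ := hsupp.isCompact.isBounded.subset_closedBall 0
  set R : ℝ := max R0 0 + 1 with hRdef
  have hR : (0:ℝ) < R := by
    have := le_max_right R0 (0:ℝ); rw [hRdef]; linarith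
  have hout : ∀ x : EuclideanSpace ℝ (Fin n), R ≤ ‖x‖ → x ∉ tsupport u := by
    intro x hx hmem
    have h1 := hR0 hmem
    rw [Metric.mem_closedBall, dist_zero_right] at h1
    have h2 := le_max_left R0 (0:ℝ)
    rw [hRdef] at hx
    linarith
  have hvR : ∀ t : ℝ, R ≤ t → v t = 0 := by
    intro t htR
    show u (t • e) = 0
    refine image_eq_zero_of_notMem_tsupport (hout _ ?_)
    rw [hnsm, abs_of_nonneg (by linarith)]
    exact htR
  have hdR : ∀ t : ℝ, R ≤ t → d t = 0 := by
    intro t htR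
    have hnot : (t • e) ∉ tsupport u := by
      refine hout _ ?_
      rw [hnsm, abs_of_nonneg (by linarith)]
      exact htR
    have hzero : fderiv ℝ u (t • e) = 0 := by
      by_contra h
      exact hnot (support_fderiv_subset ℝ (Function.mem_support.2 h))
    show (fderiv ℝ u (t • e)) e = 0
    rw [hzero]
    rfl
  have hvbound : ∀ t : ℝ, 0 < t → |v t| ≤ ∫ s in t..R, |d s| := by
    intro t ht
    rcases le_or_gt t R with htR | htR
    · have hftc : ∫ s in t..R, d s = v R - v t :=
        intervalIntegral.integral_eq_sub_of_hasDerivAt (fun s _ => hvd s)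
          (hdc.intervalIntegrable t R)
      have hvR0 : v R = 0 := hvR R le_rfl
      rw [hvR0, zero_sub] at hftc
      calc |v t| = |∫ s in t..R, d s| := by rw [hftc, abs_neg]
        _ ≤ ∫ s in t..R, |d s| := intervalIntegral.abs_integral_le_integral_abs htR
    · have h0 : (∫ s in t..R, |d s|) = 0 := by
        rw [intervalIntegral.integral_congr (g := fun _ => (0:ℝ)) ?_]
        · simp
        · intro s hs
          rw [uIcc_of_ge htR.le] at hs
          show |d s| = (0:ℝ)
          rw [hdR s hs.1, abs_zero]
      rw [hvR t htR.le, h0, abs_zero]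
  -- key identity for the gradient of a radial function
  have hkey : ∀ x : EuclideanSpace ℝ (Fin n), x ≠ 0 → ‖fderiv ℝ u x‖ = |d ‖x‖| := by
    intro x hx
    have hx0 : (0:ℝ) < ‖x‖ := norm_pos_iff.2 hx
    set xh : EuclideanSpace ℝ (Fin n) := ‖x‖⁻¹ • x with hxh
    have hxhn : ‖xh‖ = 1 := by
      rw [hxh, norm_smul, norm_inv, norm_norm, inv_mul_cancel₀ (ne_of_gt hx0)]
    have hformula : ∀ w : EuclideanSpace ℝ (Fin n),
        (fderiv ℝ u x) w = d ‖x‖ * ((inner ℝ x w : ℝ) / ‖x‖) := by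
      intro w
      have hcurve2 : HasDerivAt (fun s : ℝ => x + s • w) w 0 := hcurve w x 0
      have hLHS : HasDerivAt (fun s : ℝ => u (x + s • w)) ((fderiv ℝ u x) w) 0 := by
        have h0 := (hud (x + (0:ℝ) • w)).hasFDerivAt.comp_hasDerivAt 0 hcurve2
        simpa [Function.comp_def] using h0
      have hinner : (inner ℝ x x : ℝ) ≠ 0 := by
        rw [real_inner_self_eq_norm_mul_norm]
        positivity
      have hN : HasDerivAt (fun s : ℝ => (inner ℝ (x + s • w) (x + s • w) : ℝ))
          ((inner ℝ x w : ℝ) + (inner ℝ x w : ℝ)) 0 := by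
        have h0 := HasDerivAt.inner ℝ hcurve2 hcurve2
        simp only [zero_smul, add_zero] at h0
        refine h0.congr_deriv ?_
        rw [real_inner_comm x w]
      have hsq' : HasDerivAt Real.sqrt (1 / (2 * Real.sqrt (inner ℝ x x : ℝ)))
          ((inner ℝ (x + (0:ℝ) • w) (x + (0:ℝ) • w) : ℝ)) := by
        have h00 : ((inner ℝ (x + (0:ℝ) • w) (x + (0:ℝ) • w)) : ℝ) = (inner ℝ x x : ℝ) := by
          simp only [zero_smul, add_zero]
        rw [h00]
        exact Real.hasDerivAt_sqrt hinner
      have hgfun : (fun s : ℝ => Real.sqrt (inner ℝ (x + s • w) (x + s • w) : ℝ))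
          = fun s : ℝ => ‖x + s • w‖ := by
        funext s
        rw [real_inner_self_eq_norm_mul_norm, Real.sqrt_mul_self (norm_nonneg _)]
      have hg : HasDerivAt (fun s : ℝ => ‖x + s • w‖) ((inner ℝ x w : ℝ) / ‖x‖) 0 := by
        have h0 := hsq'.comp 0 hN
        have h1 : HasDerivAt (fun s : ℝ => Real.sqrt (inner ℝ (x + s • w) (x + s • w) : ℝ))
            (1 / (2 * Real.sqrt (inner ℝ x x : ℝ)) * ((inner ℝ x w : ℝ) + (inner ℝ x w : ℝ))) 0 := h0
        rw [hgfun] at h1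
        convert h1 using 1
        rw [real_inner_self_eq_norm_mul_norm, Real.sqrt_mul_self (norm_nonneg _)]
        field_simp
        ring
      have hfun : (fun s : ℝ => u (x + s • w)) = v ∘ (fun s : ℝ => ‖x + s • w‖) := by
        funext s
        rw [Function.comp_apply, ← huv]
      have hRHS : HasDerivAt (fun s : ℝ => u (x + s • w))
          (d ‖x‖ * ((inner ℝ x w : ℝ) / ‖x‖)) 0 := by
        rw [hfun]
        have h0 := (hvd ‖x + (0:ℝ) • w‖).comp 0 hg
        simpa using h0
      exact HasDerivAt.unique hLHS hRHS
    refine le_antisymm ?_ ?_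
    · refine ContinuousLinearMap.opNorm_le_bound _ (abs_nonneg _) (fun w => ?_)
      rw [hformula w, Real.norm_eq_abs, abs_mul, abs_div, abs_norm]
      refine le_trans (mul_le_mul_of_nonneg_left ?_ (abs_nonneg _)) le_rfl
      rw [div_le_iff₀ hx0]
      calc |(inner ℝ x w : ℝ)| ≤ ‖x‖ * ‖w‖ := abs_real_inner_le_norm x w
        _ = ‖w‖ * ‖x‖ := mul_comm _ _
    · have hxx : (fderiv ℝ u x) xh = d ‖x‖ := by
        rw [hformula xh, hxh, real_inner_smul_right, real_inner_self_eq_norm_mul_norm]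
        field_simp
      calc |d ‖x‖| = ‖(fderiv ℝ u x) xh‖ := by rw [hxx, Real.norm_eq_abs]
        _ ≤ ‖fderiv ℝ u x‖ * ‖xh‖ := ContinuousLinearMap.le_opNorm _ _
        _ = ‖fderiv ℝ u x‖ := by rw [hxhn, mul_one]
  -- reduction to one dimension via polar coordinates
  have hdim : Module.finrank ℝ (EuclideanSpace ℝ (Fin n)) = n := finrank_euclideanSpace_fin
  have hcast : ((n-1:ℕ):ℝ) = (n:ℝ) - 1 := by
    rw [Nat.cast_sub hn1, Nat.cast_one]
  have hLHSeq : (∫ x : EuclideanSpace ℝ (Fin n), (‖x‖ ^ γ * |u x|) ^ r)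
      = c * ∫ t in Ioi (0:ℝ), t ^ (σ + (σ+1)*(r-p)/p) * |v t| ^ r := by
    have h1 : (∫ x : EuclideanSpace ℝ (Fin n), (‖x‖ ^ γ * |u x|) ^ r)
        = ∫ x : EuclideanSpace ℝ (Fin n), (fun t : ℝ => (t ^ γ * |v t|) ^ r) ‖x‖ :=
      integral_congr_ae (Eventually.of_forall fun x => by simp only [huv x])
    rw [h1, MeasureTheory.integral_fun_norm_addHaar volume
      (fun t : ℝ => (t ^ γ * |v t|) ^ r), hdim, nsmul_eq_mul, smul_eq_mul, ← mul_assoc]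
    rw [measureReal_def, ← hcdef]
    congr 1
    refine setIntegral_congr_fun measurableSet_Ioi (fun t ht => ?_)
    have ht0 : (0:ℝ) < t := ht
    rw [smul_eq_mul, Real.mul_rpow (Real.rpow_nonneg ht0.le _) (abs_nonneg _),
      ← Real.rpow_natCast t (n-1), ← Real.rpow_mul ht0.le, ← mul_assoc,
      ← Real.rpow_add ht0, hcast, hexp]
  have hae0 : ∀ᵐ x : EuclideanSpace ℝ (Fin n) ∂volume, x ≠ 0 := by
    have h0 : volume ({(0:EuclideanSpace ℝ (Fin n))} : Set (EuclideanSpace ℝ (Fin n))) = 0 :=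
      measure_singleton 0
    rw [ae_iff]
    convert h0 using 2
    ext x
    simp
  have hRHSeq : (∫ x : EuclideanSpace ℝ (Fin n), (‖x‖ ^ α * ‖fderiv ℝ u x‖) ^ p)
      = c * ∫ t in Ioi (0:ℝ), t ^ (σ + p) * |d t| ^ p := by
    have h1 : (∫ x : EuclideanSpace ℝ (Fin n), (‖x‖ ^ α * ‖fderiv ℝ u x‖) ^ p)
        = ∫ x : EuclideanSpace ℝ (Fin n), (fun t : ℝ => (t ^ α * |d t|) ^ p) ‖x‖ := by
      refine integral_congr_ae ?_
      filter_upwards [hae0] with x hx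
      simp only [hkey x hx]
    rw [h1, MeasureTheory.integral_fun_norm_addHaar volume
      (fun t : ℝ => (t ^ α * |d t|) ^ p), hdim, nsmul_eq_mul, smul_eq_mul, ← mul_assoc]
    rw [measureReal_def, ← hcdef]
    congr 1
    refine setIntegral_congr_fun measurableSet_Ioi (fun t ht => ?_)
    have ht0 : (0:ℝ) < t := ht
    rw [smul_eq_mul, Real.mul_rpow (Real.rpow_nonneg ht0.le _) (abs_nonneg _),
      ← Real.rpow_natCast t (n-1), ← Real.rpow_mul ht0.le, ← mul_assoc,
      ← Real.rpow_add ht0, hcast, ← hexp2]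
  -- apply the 1D inequality
  have h1D := hC1spec R hR (fun s => |d s|) v hdc.abs (fun s => abs_nonneg _)
    (fun s hs => by show |d s| = (0:ℝ); rw [hdR s hs, abs_zero]) hvbound
  have hIpnn : 0 ≤ ∫ t in Ioi (0:ℝ), t ^ (σ + p) * |d t| ^ p :=
    setIntegral_nonneg measurableSet_Ioi (fun t ht =>
      mul_nonneg (Real.rpow_nonneg (le_of_lt ht) _) (Real.rpow_nonneg (abs_nonneg _) _))
  have hLnn : 0 ≤ ∫ t in Ioi (0:ℝ), t ^ (σ + (σ+1)*(r-p)/p) * |v t| ^ r :=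
    setIntegral_nonneg measurableSet_Ioi (fun t ht =>
      mul_nonneg (Real.rpow_nonneg (le_of_lt ht) _) (Real.rpow_nonneg (abs_nonneg _) _))
  rw [hLHSeq, hRHSeq]
  set L : ℝ := ∫ t in Ioi (0:ℝ), t ^ (σ + (σ+1)*(r-p)/p) * |v t| ^ r
  set Ip : ℝ := ∫ t in Ioi (0:ℝ), t ^ (σ + p) * |d t| ^ p
  calc (c * L) ^ (1/r) ≤ (c * (C1 * Ip ^ (r/p))) ^ (1/r) :=
        Real.rpow_le_rpow (mul_nonneg hcpos.le hLnn)
          (mul_le_mul_of_nonneg_left h1D hcpos.le) (by positivity)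
    _ = C1 ^ (1/r) * c ^ (1/r) / c ^ (1/p) * (c * Ip) ^ (1/p) := by
        rw [Real.mul_rpow hcpos.le (mul_nonneg hC1.le (Real.rpow_nonneg hIpnn _)),
          Real.mul_rpow hC1.le (Real.rpow_nonneg hIpnn _),
          ← Real.rpow_mul hIpnn,
          show r/p*(1/r) = 1/p from by field_simp,
          Real.mul_rpow hcpos.le hIpnn]
        field_simp
end
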